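/- arXiv:1709.09646 — 6 statements merged into one kernel-verified Lean document; each statement's English description precedes it below -/
import Mathlib

section
/- Let X be an infinite-dimensional real Banach space. Then X has a separable quotient if and only if X admits a strictly increasing sequence (X_n) of closed linear subspaces of X whose union is dense in X. -/
/-
If `X ⧸ Y` is separable and infinite-dimensional, the spans of the first `n` terms of a dense
sequence, thinned out to a strictly increasing subsequence, are finite-dimensional (hence closed)
subspaces of `X ⧸ Y` with dense union; their preimages in `X` do the job.

Conversely, pick `xₙ ∈ Sₙ₊₁ \ Sₙ` and, by Hahn–Banach, continuous functionals `fₙ` vanishing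
on `Sₙ` with `fₙ xₙ = 1`, and let `Y = ⋂ ker fₙ`. Every `fₖ` with `k ≥ n` vanishes on `Sₙ`, so the
image of `Sₙ` in `X ⧸ Y` embeds into `ℝⁿ` via `f₀, …, fₙ₋₁`. The `xₙ` make these images strictly
increasing, which rules out finite dimension, and their union is dense, which gives separability.
-/

/-- A Banach space has a separable quotient if there is a closed linear subspace `Y`
such that the quotient `X ⧸ Y` is infinite-dimensional and separable. -/
def HasSeparableQuotient (X : Type*) [NormedAddCommGroup X] [NormedSpace ℝ X] : Prop :=
  ∃ Y : Submodule ℝ X, IsClosed (Y : Set X) ∧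
    ¬ FiniteDimensional ℝ (X ⧸ Y) ∧ TopologicalSpace.SeparableSpace (X ⧸ Y)

open Set TopologicalSpace Submodule

theorem Monotone.exists_strictMono_subseq {α : Type*} [PartialOrder α] {u : ℕ → α}
    (hu : Monotone u) (h : ∀ n, ∃ m, u n < u m) :
    ∃ φ : ℕ → ℕ, StrictMono φ ∧ StrictMono (u ∘ φ) := by
  obtain ⟨φ, hinc | hstable⟩ := exists_increasing_or_nonincreasing_subseq (· < ·) u
  · exact ⟨φ, φ.strictMono, fun m n hmn => hinc m n hmn⟩
  · obtain ⟨m, hm⟩ := h (φ 0)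
    exact absurd (hm.trans_le (hu ((φ.strictMono.id_le m).trans (φ.monotone m.le_succ))))
      (hstable 0 (m + 1) m.succ_pos)

theorem not_finiteDimensional_of_strictMono {K V : Type*} [DivisionRing K] [AddCommGroup V]
    [Module K V] {F : ℕ → Submodule K V} (hF : StrictMono F) : ¬ FiniteDimensional K V :=
  fun _ => not_strictMono_of_wellFoundedGT F hF

theorem separableSpace_of_dense_iUnion_finite {R E : Type*} [Semiring R] [TopologicalSpace R]
    [SeparableSpace R] [AddCommMonoid E] [Module R E] [TopologicalSpace E] [ContinuousAdd E]
    [ContinuousSMul R E] {F : ℕ → Submodule R E} (hF : ∀ n, Module.Finite R (F n))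
    (hd : Dense (⋃ n, (F n : Set E))) : SeparableSpace E := by
  refine hd.isSeparable_iff.1 (.iUnion fun n => ?_)
  obtain ⟨s, hs⟩ := Module.Finite.iff_fg.1 (hF n)
  rw [← hs]
  exact s.countable_toSet.isSeparable.span

theorem exists_strictMono_finiteDimensional_dense_iUnion {𝕜 E : Type*} [NontriviallyNormedField 𝕜]
    [CompleteSpace 𝕜] [AddCommGroup E] [TopologicalSpace E] [IsTopologicalAddGroup E]
    [Module 𝕜 E] [ContinuousSMul 𝕜 E] [T2Space E] [SeparableSpace E]
    (hE : ¬ FiniteDimensional 𝕜 E) :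
    ∃ F : ℕ → Submodule 𝕜 E, (∀ n, FiniteDimensional 𝕜 (F n)) ∧ StrictMono F ∧
      Dense (⋃ n, (F n : Set E)) := by
  obtain ⟨d, hd⟩ := exists_dense_seq E
  set G : ℕ → Submodule 𝕜 E := fun n => span 𝕜 (d '' Iio n)
  have hGfin (n : ℕ) : FiniteDimensional 𝕜 (G n) :=
    FiniteDimensional.span_of_finite 𝕜 ((finite_Iio n).image d)
  have hG : Monotone G := fun m n hmn => span_mono (image_mono (Iio_subset_Iio hmn))
  have hdG (n : ℕ) : d n ∈ G (n + 1) := subset_span (mem_image_of_mem d (Nat.lt_succ_self n))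
  have hGproper (n : ℕ) : ∃ k, d k ∉ G n := by
    by_contra! hdn
    have hGtop : (G n : Set E) = univ := by
      rw [← (G n).closed_of_finiteDimensional.closure_eq]
      exact (hd.mono (range_subset_iff.2 hdn)).closure_eq
    exact hE (Module.Finite.equiv (LinearEquiv.ofTop _ (coe_eq_univ.1 hGtop)))
  have hGunbounded (n : ℕ) : ∃ m, G n < G m := by
    obtain ⟨k, hk⟩ := hGproper n
    exact ⟨max n (k + 1), SetLike.lt_iff_le_and_exists.2
      ⟨hG (le_max_left _ _), d k, hG (le_max_right _ _) (hdG k), hk⟩⟩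
  obtain ⟨φ, hφ, hGφ⟩ := hG.exists_strictMono_subseq hGunbounded
  refine ⟨G ∘ φ, fun n => hGfin (φ n), hGφ, hd.mono ?_⟩
  rintro _ ⟨k, rfl⟩
  exact mem_iUnion.2 ⟨k + 1, hG (hφ.id_le (k + 1)) (hdG k)⟩

theorem exists_closed_strictMono_dense_iUnion_comap {R E F : Type*} [Semiring R]
    [AddCommMonoid E] [Module R E] [TopologicalSpace E] [AddCommMonoid F] [Module R F]
    [TopologicalSpace F] (π : E →L[R] F) (hπ : IsOpenQuotientMap π) {G : ℕ → Submodule R F}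
    (hGc : ∀ n, IsClosed (G n : Set F)) (hG : StrictMono G) (hGd : Dense (⋃ n, (G n : Set F))) :
    ∃ S : ℕ → Submodule R E, (∀ n, IsClosed (S n : Set E)) ∧ StrictMono S ∧
      Dense (⋃ n, (S n : Set E)) := by
  refine ⟨fun n => (G n).comap (π : E →ₗ[R] F), fun n => (hGc n).preimage π.continuous,
    (comap_strictMono_of_surjective hπ.surjective).comp hG, ?_⟩
  simpa only [comap_coe, ContinuousLinearMap.coe_coe, ← preimage_iUnion] using
    hGd.preimage hπ.isOpenMap

section Biorthogonal

variable {R V : Type*} [Ring R] [AddCommGroup V] [Module R V] {S : ℕ → Submodule R V}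
  {f : ℕ → V →ₗ[R] R}

theorem finite_map_mkQ_iInf_ker [IsNoetherianRing R] (hS : Monotone S)
    (hf : ∀ k, ∀ y ∈ S k, f k y = 0) (n : ℕ) :
    Module.Finite R ((S n).map (⨅ k, LinearMap.ker (f k)).mkQ) := by
  set Y := ⨅ k, LinearMap.ker (f k)
  let Φ : V ⧸ Y →ₗ[R] (Fin n → R) := LinearMap.pi fun k => Y.liftQ (f k) (iInf_le _ _)
  refine Module.Finite.of_injective (Φ ∘ₗ ((S n).map Y.mkQ).subtype) ?_
  rw [← LinearMap.ker_eq_bot, eq_bot_iff]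
  rintro ⟨_, v, hv, rfl⟩ hΦ
  have hfv (k : ℕ) : f k v = 0 := by
    rcases lt_or_ge k n with hk | hk
    · simpa [Φ] using congrFun (LinearMap.mem_ker.1 hΦ) ⟨k, hk⟩
    · exact hf k v (hS hk hv)
  simpa [Y, Submodule.Quotient.mk_eq_zero, mem_iInf] using hfv

theorem strictMono_map_mkQ_iInf_ker [Nontrivial R] (hS : Monotone S)
    (hf : ∀ k, ∀ y ∈ S k, f k y = 0) {x : ℕ → V} (hx : ∀ n, x n ∈ S (n + 1))
    (hfx : ∀ n, f n (x n) = 1) :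
    StrictMono fun n => (S n).map (⨅ k, LinearMap.ker (f k)).mkQ := by
  refine strictMono_nat_of_lt_succ fun n => SetLike.lt_iff_le_and_exists.2
    ⟨map_mono (hS n.le_succ), _, mem_map_of_mem (hx n), ?_⟩
  rintro ⟨v, hv, hvx⟩
  have hxv := mem_iInf _ |>.1 ((Submodule.Quotient.eq _).1 hvx.symm) n
  simp [hfx, hf n v hv] at hxv

end Biorthogonal

theorem exists_mem_dual_eq_one_of_lt {𝕜 X : Type*} [RCLike 𝕜] [NormedAddCommGroup X]
    [NormedSpace 𝕜 X] {S T : Submodule 𝕜 X} (hS : IsClosed (S : Set X)) (hST : S < T) :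
    ∃ x ∈ T, ∃ f : StrongDual 𝕜 X, (∀ y ∈ S, f y = 0) ∧ f x = 1 := by
  -- as an instance, this makes `X ⧸ S` a normed space
  have : IsClosed (S : Set X) := hS
  obtain ⟨x, hxT, hxS⟩ := SetLike.exists_of_lt hST
  obtain ⟨g, hg⟩ := SeparatingDual.exists_eq_one (R := 𝕜)
    (mt (Submodule.Quotient.mk_eq_zero S).1 hxS)
  exact ⟨x, hxT, g.comp S.mkQL, fun y hy => by simp [(Submodule.Quotient.mk_eq_zero S).2 hy], hg⟩

theorem separableQuotient_iff_denseUnion_strictMono_closed_subspaces_general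
    (X : Type*) [NormedAddCommGroup X] [NormedSpace ℝ X] :
    HasSeparableQuotient X ↔
      ∃ S : ℕ → Submodule ℝ X, (∀ n, IsClosed (S n : Set X)) ∧ StrictMono S ∧
        Dense (⋃ n, (S n : Set X)) := by
  constructor
  · rintro ⟨Y, hYc, hYinf, hYsep⟩
    have : IsClosed (Y : Set X) := hYc
    obtain ⟨F, hFfin, hF, hFd⟩ := exists_strictMono_finiteDimensional_dense_iUnion hYinf
    exact exists_closed_strictMono_dense_iUnion_comap Y.mkQL Y.isOpenQuotientMap_mkQL
      (fun n => (F n).closed_of_finiteDimensional) hF hFd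
  · rintro ⟨S, hSc, hS, hSd⟩
    choose x hxS f hfS hfx using fun n => exists_mem_dual_eq_one_of_lt (hSc n) (hS n.lt_succ_self)
    set Y := ⨅ k, LinearMap.ker (f k : X →ₗ[ℝ] ℝ)
    set T := fun n => (S n).map Y.mkQ
    have hT : StrictMono T := strictMono_map_mkQ_iInf_ker hS.monotone hfS hxS hfx
    have hTd : Dense (⋃ n, (T n : Set (X ⧸ Y))) := by
      simp only [T, map_coe, ← image_iUnion]
      exact Y.mkQ_surjective.denseRange.dense_image Y.continuous_mkQ hSd
    refine ⟨Y, ?_, not_finiteDimensional_of_strictMono hT,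
      separableSpace_of_dense_iUnion_finite (finite_map_mkQ_iInf_ker hS.monotone hfS) hTd⟩
    simpa only [Y, coe_iInf] using isClosed_iInter fun k => (f k).isClosed_ker

theorem separableQuotient_iff_denseUnion_strictMono_closed_subspaces
    (X : Type*) [NormedAddCommGroup X] [NormedSpace ℝ X] [CompleteSpace X]
    (hX : ¬ FiniteDimensional ℝ X) :
    HasSeparableQuotient X ↔
      ∃ S : ℕ → Submodule ℝ X, (∀ n, IsClosed (S n : Set X)) ∧ StrictMono S ∧
        Dense (⋃ n, (S n : Set X)) :=
  separableQuotient_iff_denseUnion_strictMono_closed_subspaces_general X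
end

section
/- Let X be an infinite-dimensional real Banach space. Then X has a separable quotient if and only if X* contains a pseudobounded sequence, i.e., a sequence (x_n*) in X* for which there exists a dense linear subspace D of X with sup_n |x_n*(x)| < ∞ for every x ∈ D, while sup_n ‖x_n*‖ = ∞. -/
/-!
Forward direction: if `z` is a dense sequence in `X ⧸ Y`, pick nonzero functionals `φ k` on
`X ⧸ Y` vanishing on `z 0, …, z (k - 1)`. Rescaled to norm `k` and pulled back to `X`, they vanish
eventually at every point of the dense preimage of `span (range z)`.

Backward direction: let `f` be pointwise bounded on a dense subspace `B` and unbounded in norm.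
Unboundedness survives on `B ⊓ ker φ₁ ⊓ … ⊓ ker φₘ`, which yields indices `n k` and vectors
`e k ∈ B` with `f (n j) (e k) = 0` for `j < k`, `f (n k) (e k) = 1` and `‖e k‖` decaying fast.
Eliminating along this triangular system writes each `x ∈ B` as a convergent series
`∑ aₖ(x) • e k` plus an element of `Y = ⨅ k, ker (f (n k))`; hence `X ⧸ Y` is the closed span of
the linearly independent classes of the `e k`.
-/

open Filter Topology TopologicalSpace Set

def IsPseudobounded {X : Type*} [NormedAddCommGroup X] [NormedSpace ℝ X]
    (f : ℕ → X →L[ℝ] ℝ) : Prop :=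
  (∃ D : Submodule ℝ X, Dense (D : Set X) ∧ ∀ x ∈ D, ∃ C : ℝ, ∀ n, |f n x| ≤ C) ∧
    ∀ C : ℝ, ∃ n, C < ‖f n‖

section Forward

variable {X : Type*} [NormedAddCommGroup X] [NormedSpace ℝ X]

theorem Submodule.exists_ne_zero_le_ker_of_isClosed {F : Submodule ℝ X}
    (hFc : IsClosed (F : Set X)) (hF : F ≠ ⊤) : ∃ φ : X →L[ℝ] ℝ, φ ≠ 0 ∧ F ≤ φ.ker := by
  have := hFc
  obtain ⟨v, hv⟩ : ∃ v, v ∉ F := by simpa [Submodule.eq_top_iff'] using hF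
  have hv' : ‖F.mkQ v‖ ≠ 0 := by simpa [Submodule.Quotient.mk_eq_zero] using hv
  obtain ⟨g, -, hg⟩ := exists_dual_vector ℝ (F.mkQ v) hv'
  refine ⟨g ∘L F.mkQL, fun h => hv' ?_, fun x hx => ?_⟩
  · have hgv : g (F.mkQ v) = 0 := by simpa using congr($h v)
    rw [hg] at hgv
    exact_mod_cast hgv
  · simp [(Submodule.Quotient.mk_eq_zero F).2 hx]

theorem exists_dense_submodule_eventually_eq_zero [SeparableSpace X]
    (hX : ¬FiniteDimensional ℝ X) :
    ∃ (D : Submodule ℝ X) (φ : ℕ → X →L[ℝ] ℝ), Dense (D : Set X) ∧ (∀ k, φ k ≠ 0) ∧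
      ∀ x ∈ D, ∀ᶠ k in atTop, φ k x = 0 := by
  obtain ⟨z, hz⟩ := exists_dense_seq X
  set F : ℕ → Submodule ℝ X := fun k => Submodule.span ℝ (z '' Iio k)
  have hF_mono : Monotone F := fun k l hkl => Submodule.span_mono (image_mono (Iio_subset_Iio hkl))
  have hF_closed (k : ℕ) : IsClosed (F k : Set X) :=
    have := FiniteDimensional.span_of_finite ℝ ((finite_Iio k).image z)
    (F k).closed_of_finiteDimensional
  have hF_ne (k : ℕ) : F k ≠ ⊤ := fun hk =>
    hX (Module.finite_def.2 (hk ▸ Submodule.fg_span ((finite_Iio k).image z)))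
  choose φ hφ0 hφF using fun k =>
    Submodule.exists_ne_zero_le_ker_of_isClosed (hF_closed k) (hF_ne k)
  refine ⟨⨆ k, F k, φ, hz.mono ?_, hφ0, fun x hx => ?_⟩
  · rintro _ ⟨i, rfl⟩
    exact Submodule.mem_iSup_of_mem (i + 1)
      (Submodule.subset_span (mem_image_of_mem z i.lt_succ_self))
  · obtain ⟨k, hk⟩ := (Submodule.mem_iSup_of_directed F hF_mono.directed_le).1 hx
    filter_upwards [eventually_ge_atTop k] with m hm using hφF m (hF_mono hm hk)

theorem isPseudobounded_smul_of_eventually_eq_zero {D : Submodule ℝ X} (hD : Dense (D : Set X))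
    {ψ : ℕ → X →L[ℝ] ℝ} (hψ : ∀ k, ψ k ≠ 0) (hev : ∀ x ∈ D, ∀ᶠ k in atTop, ψ k x = 0) :
    IsPseudobounded fun k : ℕ => ((k : ℝ) / ‖ψ k‖) • ψ k := by
  refine ⟨⟨D, hD, fun x hx => ?_⟩, fun C => ?_⟩
  · have : Tendsto (fun k : ℕ => |(((k : ℝ) / ‖ψ k‖) • ψ k) x|) atTop (𝓝 0) :=
      tendsto_const_nhds.congr' ((hev x hx).mono fun k hk => by simp [hk])
    obtain ⟨C, hC⟩ := this.bddAbove_range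
    exact ⟨C, fun n => hC ⟨n, rfl⟩⟩
  · obtain ⟨n, hn⟩ := exists_nat_gt C
    refine ⟨n, ?_⟩
    rwa [norm_smul, norm_div, Real.norm_natCast, norm_norm,
      div_mul_cancel₀ _ (norm_ne_zero_iff.2 (hψ n))]

theorem HasSeparableQuotient.exists_isPseudobounded (h : HasSeparableQuotient X) :
    ∃ f : ℕ → X →L[ℝ] ℝ, IsPseudobounded f := by
  obtain ⟨Y, hY, hinf, hsep⟩ := h
  have := hY
  obtain ⟨D, φ, hD, hφ, hev⟩ := exists_dense_submodule_eventually_eq_zero hinf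
  have hψ (k : ℕ) : φ k ∘L Y.mkQL ≠ 0 := fun h => hφ k <| by
    ext w
    obtain ⟨x, rfl⟩ := Y.mkQ_surjective w
    exact congr($h x)
  exact ⟨_, isPseudobounded_smul_of_eventually_eq_zero (D := D.comap Y.mkQ)
    (hD.preimage Y.isOpenMap_mkQ) hψ fun x hx => hev _ hx⟩

end Forward

theorem mul_prod_one_add_le_of_le_div {a c : ℕ → ℝ} (hc : ∀ k, 0 ≤ c k)
    (ha : ∀ k, a (k + 1) ≤ a k / (2 * (1 + c k))) (k : ℕ) :
    a k * ∏ j ∈ Finset.range k, (1 + c j) ≤ a 0 * (1 / 2) ^ k := by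
  induction k with
  | zero => simp
  | succ k ih =>
    have hpos : 0 < 1 + c k := by linarith [hc k]
    have hP : 0 ≤ ∏ j ∈ Finset.range k, (1 + c j) :=
      Finset.prod_nonneg fun j _ => by linarith [hc j]
    calc a (k + 1) * ∏ j ∈ Finset.range (k + 1), (1 + c j)
        ≤ a k / (2 * (1 + c k)) * ((∏ j ∈ Finset.range k, (1 + c j)) * (1 + c k)) := by
          rw [Finset.prod_range_succ]; gcongr; exact ha k
      _ = a k * (∏ j ∈ Finset.range k, (1 + c j)) / 2 := by field_simp
      _ ≤ a 0 * (1 / 2) ^ (k + 1) := by rw [pow_succ]; linarith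

section Triangular

variable {X : Type*} [NormedAddCommGroup X] [NormedSpace ℝ X] (φ : ℕ → X →L[ℝ] ℝ) (e : ℕ → X)

/-- Elimination along `e`: step `k` removes from `x` the multiple of `e k` seen by `φ k`. For a
triangular system (`φ j (e k) = 0` for `j < k`, `φ k (e k) = 1`) this expands
`x = ∑ j ∈ range k, triangularCoord φ e j x • e j + triangularRemainder φ e k x`. -/
def triangularRemainder : ℕ → X →L[ℝ] X
  | 0 => ContinuousLinearMap.id ℝ X
  | k + 1 => triangularRemainder k - ((φ k).comp (triangularRemainder k)).smulRight (e k)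

def triangularCoord (k : ℕ) : X →L[ℝ] ℝ := (φ k).comp (triangularRemainder φ e k)

variable {φ e}

@[simp]
theorem triangularRemainder_zero_apply (x : X) : triangularRemainder φ e 0 x = x := rfl

@[simp]
theorem triangularRemainder_succ_apply (k : ℕ) (x : X) :
    triangularRemainder φ e (k + 1) x =
      triangularRemainder φ e k x - triangularCoord φ e k x • e k := rfl

theorem triangularRemainder_apply (k : ℕ) (x : X) :
    triangularRemainder φ e k x = x - ∑ j ∈ Finset.range k, triangularCoord φ e j x • e j := by
  induction k with
  | zero => simp
  | succ k ih => rw [triangularRemainder_succ_apply, ih, Finset.sum_range_succ, sub_add_eq_sub_sub]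

theorem triangularRemainder_eq_self {y : X} (hy : ∀ k, φ k y = 0) (k : ℕ) :
    triangularRemainder φ e k y = y := by
  induction k with
  | zero => rfl
  | succ k ih => simp [ih, triangularCoord, hy]

theorem apply_triangularRemainder_of_lt (hone : ∀ k, φ k (e k) = 1)
    (htri : ∀ j k, j < k → φ j (e k) = 0) (x : X) {j k : ℕ} (hjk : j < k) :
    φ j (triangularRemainder φ e k x) = 0 := by
  induction k with
  | zero => exact absurd hjk j.not_lt_zero
  | succ k ih =>
    rcases (Nat.lt_succ_iff_lt_or_eq.1 hjk) with hjk | rfl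
    · simp [ih hjk, htri j k hjk]
    · simp [triangularCoord, hone]

theorem triangularRemainder_apply_of_le (htri : ∀ j k, j < k → φ j (e k) = 0) {j k : ℕ}
    (hkj : k ≤ j) : triangularRemainder φ e k (e j) = e j := by
  induction k with
  | zero => rfl
  | succ k ih => simp [ih (k.le_succ.trans hkj), triangularCoord, htri k j hkj]

theorem triangularRemainder_apply_of_lt (hone : ∀ k, φ k (e k) = 1)
    (htri : ∀ j k, j < k → φ j (e k) = 0) {j k : ℕ} (hjk : j < k) :
    triangularRemainder φ e k (e j) = 0 := by
  induction k, hjk using Nat.le_induction with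
  | base => simp [triangularRemainder_apply_of_le htri le_rfl, triangularCoord, hone]
  | succ k _ ih => simp [ih, triangularCoord]

theorem triangularCoord_apply (hone : ∀ k, φ k (e k) = 1)
    (htri : ∀ j k, j < k → φ j (e k) = 0) (j k : ℕ) :
    triangularCoord φ e k (e j) = if j = k then 1 else 0 := by
  rcases lt_trichotomy j k with h | rfl | h
  · simp [triangularCoord, triangularRemainder_apply_of_lt hone htri h, h.ne]
  · simp [triangularCoord, triangularRemainder_apply_of_le htri le_rfl, hone]
  · simp [triangularCoord, triangularRemainder_apply_of_le htri h.le, htri k j h, h.ne']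

theorem abs_apply_triangularRemainder_le {x : X} {C : ℝ} {c : ℕ → ℝ} (hx : ∀ i, |φ i x| ≤ C)
    (hc : ∀ i j, |φ i (e j)| ≤ c j) (k i : ℕ) :
    |φ i (triangularRemainder φ e k x)| ≤ C * ∏ j ∈ Finset.range k, (1 + c j) := by
  induction k generalizing i with
  | zero => simpa using hx i
  | succ k ih =>
    have hck : |triangularCoord φ e k x| ≤ C * ∏ j ∈ Finset.range k, (1 + c j) := ih k
    calc |φ i (triangularRemainder φ e (k + 1) x)|
        = |φ i (triangularRemainder φ e k x) - triangularCoord φ e k x * φ i (e k)| := by simp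
      _ ≤ |φ i (triangularRemainder φ e k x)| + |triangularCoord φ e k x| * |φ i (e k)| := by
          rw [← abs_mul]; exact abs_sub _ _
      _ ≤ C * ∏ j ∈ Finset.range k, (1 + c j) + (C * ∏ j ∈ Finset.range k, (1 + c j)) * c k :=
          add_le_add (ih i) (mul_le_mul hck (hc i k) (abs_nonneg _) ((abs_nonneg _).trans hck))
      _ = C * ∏ j ∈ Finset.range (k + 1), (1 + c j) := by rw [Finset.prod_range_succ]; ring

theorem summable_triangularCoord_smul [CompleteSpace X] {x : X} {C : ℝ} {c : ℕ → ℝ}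
    (hx : ∀ i, |φ i x| ≤ C) (hc : ∀ i j, |φ i (e j)| ≤ c j)
    (hdecay : ∀ k, ‖e (k + 1)‖ ≤ ‖e k‖ / (2 * (1 + c k))) :
    Summable fun k => triangularCoord φ e k x • e k := by
  have hC : 0 ≤ C := (abs_nonneg _).trans (hx 0)
  refine .of_norm_bounded (summable_geometric_two.mul_left (C * ‖e 0‖)) fun k => ?_
  calc ‖triangularCoord φ e k x • e k‖ = |triangularCoord φ e k x| * ‖e k‖ := by
        rw [norm_smul, Real.norm_eq_abs]
    _ ≤ (C * ∏ j ∈ Finset.range k, (1 + c j)) * ‖e k‖ := by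
        gcongr; exact abs_apply_triangularRemainder_le hx hc k k
    _ ≤ C * (‖e 0‖ * (1 / 2) ^ k) := by
        rw [mul_assoc, mul_comm (∏ j ∈ Finset.range k, (1 + c j))]
        exact mul_le_mul_of_nonneg_left
          (mul_prod_one_add_le_of_le_div (a := fun k => ‖e k‖)
            (fun j => (abs_nonneg _).trans (hc 0 j)) hdecay k) hC
    _ = C * ‖e 0‖ * (1 / 2) ^ k := by ring

theorem linearIndependent_mkQ_iInf_ker (hone : ∀ k, φ k (e k) = 1)
    (htri : ∀ j k, j < k → φ j (e k) = 0) :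
    LinearIndependent ℝ fun k => (⨅ i, (φ i).ker).mkQ (e k) := by
  rw [linearIndependent_iff']
  intro s g hg i hi
  have hmem : ∑ k ∈ s, g k • e k ∈ ⨅ i, (φ i).ker := by
    rw [← Submodule.Quotient.mk_eq_zero, ← Submodule.mkQ_apply]
    simp only [map_sum, map_smul]
    exact hg
  have hker (j : ℕ) : φ j (∑ k ∈ s, g k • e k) = 0 := (Submodule.mem_iInf _).1 hmem j
  have : triangularCoord φ e i (∑ k ∈ s, g k • e k) = 0 := by
    simp only [triangularCoord, ContinuousLinearMap.comp_apply, triangularRemainder_eq_self hker,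
      hker]
  simpa [triangularCoord_apply hone htri, hi] using this

theorem mkQ_mem_closure_span_of_summable (hone : ∀ k, φ k (e k) = 1)
    (htri : ∀ j k, j < k → φ j (e k) = 0) {x : X}
    (hx : Summable fun k => triangularCoord φ e k x • e k) :
    (⨅ i, (φ i).ker).mkQ x ∈
      closure (Submodule.span ℝ (range fun k => (⨅ i, (φ i).ker).mkQ (e k)) : Set _) := by
  set Y := ⨅ i, (φ i).ker
  set s := ∑' k, triangularCoord φ e k x • e k
  have hR : Tendsto (fun k => triangularRemainder φ e k x) atTop (𝓝 (x - s)) := by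
    simpa only [triangularRemainder_apply] using tendsto_const_nhds.sub hx.hasSum.tendsto_sum_nat
  have hxs : x - s ∈ Y := by
    simp only [Y, Submodule.mem_iInf]
    intro j
    exact tendsto_nhds_unique (((φ j).continuous.tendsto _).comp hR)
      (tendsto_const_nhds.congr' ((eventually_gt_atTop j).mono fun k hk =>
        (apply_triangularRemainder_of_lt hone htri x hk).symm))
  have hxs' : Y.mkQ x = Y.mkQ s := by
    rwa [← sub_eq_zero, ← map_sub, Submodule.mkQ_apply, Submodule.Quotient.mk_eq_zero]
  rw [hxs']
  refine mem_closure_of_tendsto ((Y.mkQL.continuous.tendsto s).comp hx.hasSum.tendsto_sum_nat)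
    (Eventually.of_forall fun K => ?_)
  simp only [Function.comp_apply, Submodule.coe_mkQL, map_sum, map_smul]
  exact Submodule.sum_mem _ fun k _ => Submodule.smul_mem _ _ (Submodule.subset_span ⟨k, rfl⟩)

theorem hasSeparableQuotient_of_summable (hone : ∀ k, φ k (e k) = 1)
    (htri : ∀ j k, j < k → φ j (e k) = 0) {B : Submodule ℝ X} (hB : Dense (B : Set X))
    (hsum : ∀ x ∈ B, Summable fun k => triangularCoord φ e k x • e k) :
    HasSeparableQuotient X := by
  set Y := ⨅ i, (φ i).ker
  have hY : IsClosed (Y : Set X) := by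
    simpa only [Y, Submodule.coe_iInf] using isClosed_iInter fun i => (φ i).isClosed_ker
  have hT : Dense (closure (Submodule.span ℝ (range fun k => Y.mkQ (e k)) : Set (X ⧸ Y))) :=
    (Y.mkQ_surjective.denseRange.dense_image Y.mkQL.continuous hB).mono
      (image_subset_iff.2 fun x hx => mkQ_mem_closure_span_of_summable hone htri (hsum x hx))
  refine ⟨Y, hY, fun _ => Module.Finite.not_linearIndependent_of_infinite _
    (linearIndependent_mkQ_iInf_ker hone htri), ?_⟩
  exact hT.isSeparable_iff.1 (countable_range _).isSeparable.span.closure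

end Triangular

section Unbounded

variable {X : Type*} [NormedAddCommGroup X] [NormedSpace ℝ X] {f : ℕ → X →L[ℝ] ℝ}

def UniformlyBoundedOn (f : ℕ → X →L[ℝ] ℝ) (S : Submodule ℝ X) : Prop :=
  ∃ M, ∀ n, ∀ x ∈ S, |f n x| ≤ M * ‖x‖

theorem UniformlyBoundedOn.exists_norm_le_of_dense {S : Submodule ℝ X}
    (h : UniformlyBoundedOn f S) (hS : Dense (S : Set X)) : ∃ M, ∀ n, ‖f n‖ ≤ M := by
  obtain ⟨M, hM⟩ := h
  refine ⟨max M 0, fun n => (f n).opNorm_le_bound (le_max_right _ _) fun x => ?_⟩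
  have hclosed : IsClosed {x : X | |f n x| ≤ max M 0 * ‖x‖} :=
    isClosed_le (by fun_prop) (by fun_prop)
  have hsub : (S : Set X) ⊆ {x | |f n x| ≤ max M 0 * ‖x‖} := fun x hx =>
    (hM n x hx).trans (mul_le_mul_of_nonneg_right (le_max_left _ _) (norm_nonneg x))
  rw [Real.norm_eq_abs]
  exact hclosed.closure_subset_iff.2 hsub (hS.closure_eq ▸ mem_univ x)

/-- If `φ u = 1` with `u ∈ S`, then `x ↦ x - φ x • u` maps `S` boundedly onto `S ⊓ ker φ`, and the
discarded part `φ x • u` is controlled by the pointwise bound at `u`. -/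
theorem UniformlyBoundedOn.of_inf_ker {S : Submodule ℝ X}
    (hS : ∀ x ∈ S, ∃ C, ∀ n, |f n x| ≤ C) {φ : X →L[ℝ] ℝ}
    (h : UniformlyBoundedOn f (S ⊓ φ.ker)) : UniformlyBoundedOn f S := by
  obtain ⟨M, hM⟩ := h
  by_cases hφ : ∀ u ∈ S, φ u = 0
  · exact ⟨M, fun n x hx => hM n x ⟨hx, hφ x hx⟩⟩
  push Not at hφ
  obtain ⟨u₀, hu₀S, hu₀⟩ := hφ
  set u := (φ u₀)⁻¹ • u₀
  have huS : u ∈ S := S.smul_mem _ hu₀S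
  have hu : φ u = 1 := by simp [u, hu₀]
  obtain ⟨C, hC⟩ := hS u huS
  refine ⟨max M 0 * (1 + ‖φ‖ * ‖u‖) + ‖φ‖ * C, fun n x hx => ?_⟩
  have hx' : x - φ x • u ∈ S ⊓ φ.ker := ⟨S.sub_mem hx (S.smul_mem _ huS), by simp [hu]⟩
  have hφx : |φ x| ≤ ‖φ‖ * ‖x‖ := by simpa using φ.le_opNorm x
  have hnorm : ‖x - φ x • u‖ ≤ (1 + ‖φ‖ * ‖u‖) * ‖x‖ := calc
    ‖x - φ x • u‖ ≤ ‖x‖ + |φ x| * ‖u‖ := by simpa [norm_smul] using norm_sub_le x (φ x • u)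
    _ ≤ ‖x‖ + ‖φ‖ * ‖x‖ * ‖u‖ := by gcongr
    _ = (1 + ‖φ‖ * ‖u‖) * ‖x‖ := by ring
  calc |f n x| = |f n (x - φ x • u) + φ x * f n u| := by simp
    _ ≤ |f n (x - φ x • u)| + |φ x| * |f n u| := by rw [← abs_mul]; exact abs_add_le _ _
    _ ≤ max M 0 * ((1 + ‖φ‖ * ‖u‖) * ‖x‖) + ‖φ‖ * ‖x‖ * C := by
        gcongr ?_ + ?_
        · exact (hM n _ hx').trans
            (mul_le_mul (le_max_left _ _) hnorm (norm_nonneg _) (le_max_right _ _))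
        · exact mul_le_mul hφx (hC n) (abs_nonneg _) (by positivity)
    _ = (max M 0 * (1 + ‖φ‖ * ‖u‖) + ‖φ‖ * C) * ‖x‖ := by ring

theorem UniformlyBoundedOn.of_inf_iInf_ker {S : Submodule ℝ X}
    (hS : ∀ x ∈ S, ∃ C, ∀ n, |f n x| ≤ C) (t : Finset (X →L[ℝ] ℝ))
    (h : UniformlyBoundedOn f (S ⊓ ⨅ φ ∈ t, φ.ker)) : UniformlyBoundedOn f S := by
  classical
  induction t using Finset.induction_on generalizing S with
  | empty => simpa using h
  | insert φ t _ ih =>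
    rw [Finset.iInf_insert, ← inf_assoc] at h
    exact (ih (fun x hx => hS x (Submodule.mem_inf.1 hx).1) h).of_inf_ker hS

theorem exists_mem_apply_eq_one_of_unbounded {B : Submodule ℝ X} (hB : Dense (B : Set X))
    (hbdd : ∀ x ∈ B, ∃ C, ∀ n, |f n x| ≤ C) (hunb : ∀ C, ∃ n, C < ‖f n‖)
    (t : Finset (X →L[ℝ] ℝ)) {ε : ℝ} (hε : 0 < ε) :
    ∃ n, ∃ e ∈ B, (∀ φ ∈ t, φ e = 0) ∧ f n e = 1 ∧ ‖e‖ < ε := by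
  have hnot : ¬UniformlyBoundedOn f (B ⊓ ⨅ φ ∈ t, φ.ker) := fun h => by
    obtain ⟨M, hM⟩ := (h.of_inf_iInf_ker hbdd t).exists_norm_le_of_dense hB
    obtain ⟨n, hn⟩ := hunb M
    exact (hn.trans_le (hM n)).false
  simp only [UniformlyBoundedOn, not_exists, not_forall, not_le] at hnot
  obtain ⟨n, x, hx, hlt⟩ := hnot ε⁻¹
  have hfx : f n x ≠ 0 := fun h => by
    rw [h, abs_zero] at hlt
    exact hlt.not_ge (by positivity)
  obtain ⟨hxB, hxt⟩ := Submodule.mem_inf.1 hx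
  simp only [Submodule.mem_iInf] at hxt
  refine ⟨n, (f n x)⁻¹ • x, B.smul_mem _ hxB, fun φ hφ => ?_, by simp [hfx], ?_⟩
  · simp [show φ x = 0 from hxt φ hφ]
  · rw [norm_smul, norm_inv, Real.norm_eq_abs, inv_mul_lt_iff₀ (abs_pos.2 hfx)]
    rwa [inv_mul_lt_iff₀ hε, mul_comm] at hlt

theorem exists_triangular_seq {B : Submodule ℝ X} (hB : Dense (B : Set X))
    (hbdd : ∀ x ∈ B, ∃ C, ∀ n, |f n x| ≤ C) (hunb : ∀ C, ∃ n, C < ‖f n‖)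
    (δ : X → ℝ) (hδ : ∀ x ≠ 0, 0 < δ x) :
    ∃ (n : ℕ → ℕ) (e : ℕ → X), (∀ k, e k ∈ B) ∧ (∀ k, f (n k) (e k) = 1) ∧
      (∀ j k, j < k → f (n j) (e k) = 0) ∧ ∀ k, ‖e (k + 1)‖ ≤ δ (e k) := by
  classical
  obtain ⟨p, hpB, hpr⟩ := exists_seq_of_forall_finset_exists (α := ℕ × X)
    (fun p => p.2 ∈ B ∧ f p.1 p.2 = 1) (fun p q => f p.1 q.2 = 0 ∧ ‖q.2‖ ≤ δ p.2) fun s hs => by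
      have hδs (p) (hp : p ∈ s) : 0 < δ p.2 := hδ _ fun h => by simpa [h] using (hs p hp).2
      obtain ⟨ε, hεs, hε⟩ : ∃ ε, (∀ p ∈ s, ε < δ p.2) ∧ 0 < ε :=
        ((s.eventually_all.2 fun p hp => eventually_nhdsWithin_of_eventually_nhds
          (eventually_lt_nhds (hδs p hp))).and (self_mem_nhdsWithin (s := Ioi (0 : ℝ)))).exists
      obtain ⟨n, e, heB, het, hne, heε⟩ :=
        exists_mem_apply_eq_one_of_unbounded hB hbdd hunb (s.image fun p => f p.1) hε
      exact ⟨(n, e), ⟨heB, hne⟩, fun p hp =>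
        ⟨het _ (Finset.mem_image_of_mem _ hp), heε.le.trans (hεs p hp).le⟩⟩
  exact ⟨fun k => (p k).1, fun k => (p k).2, fun k => (hpB k).1, fun k => (hpB k).2,
    fun j k h => (hpr j k h).1, fun k => (hpr k (k + 1) k.lt_succ_self).2⟩

theorem IsPseudobounded.hasSeparableQuotient [CompleteSpace X] (hf : IsPseudobounded f) :
    HasSeparableQuotient X := by
  obtain ⟨⟨B, hB, hbdd⟩, hunb⟩ := hf
  set c : X → ℝ := fun x => ⨆ i, |f i x|
  have hc (x : X) (hx : x ∈ B) (i : ℕ) : |f i x| ≤ c x := by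
    obtain ⟨C, hC⟩ := hbdd x hx
    exact le_ciSup ⟨C, forall_mem_range.2 hC⟩ i
  have hc0 (x : X) : 0 ≤ c x := Real.iSup_nonneg fun i => abs_nonneg _
  -- The coefficients of `x` grow at most like `∏ j < k, (1 + c (e j))`; this decay beats it.
  obtain ⟨n, e, heB, hone, htri, hdecay⟩ := exists_triangular_seq hB hbdd hunb
    (fun x => ‖x‖ / (2 * (1 + c x))) fun x hx => div_pos (norm_pos_iff.2 hx) (by linarith [hc0 x])
  exact hasSeparableQuotient_of_summable (φ := fun k => f (n k)) hone htri hB fun x hx =>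
    summable_triangularCoord_smul (fun i => hc x hx _) (fun i j => hc _ (heB j) _) hdecay

end Unbounded

theorem separableQuotient_iff_exists_pseudobounded_sequence_general
    (X : Type*) [NormedAddCommGroup X] [NormedSpace ℝ X] [CompleteSpace X] :
    HasSeparableQuotient X ↔
      ∃ f : ℕ → (X →L[ℝ] ℝ),
        (∃ D : Submodule ℝ X, Dense (D : Set X) ∧
          ∀ x ∈ D, ∃ C : ℝ, ∀ n, |f n x| ≤ C) ∧
        (∀ C : ℝ, ∃ n, C < ‖f n‖) :=
  ⟨HasSeparableQuotient.exists_isPseudobounded,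
    fun ⟨_, hf⟩ => IsPseudobounded.hasSeparableQuotient hf⟩

theorem separableQuotient_iff_exists_pseudobounded_sequence
    (X : Type*) [NormedAddCommGroup X] [NormedSpace ℝ X] [CompleteSpace X]
    (hX : ¬ FiniteDimensional ℝ X) :
    HasSeparableQuotient X ↔
      ∃ f : ℕ → (X →L[ℝ] ℝ),
        (∃ D : Submodule ℝ X, Dense (D : Set X) ∧
          ∀ x ∈ D, ∃ C : ℝ, ∀ n, |f n x| ≤ C) ∧
        (∀ C : ℝ, ∃ n, C < ‖f n‖) :=
  separableQuotient_iff_exists_pseudobounded_sequence_general X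
end

section
/- Let X be a real Banach space and let Y be an infinite-dimensional closed linear subspace of the dual X* which is reflexive (the canonical evaluation embedding of Y into its double dual Y** is surjective). Then the bounded linear operator Q : X → Y* defined by (Qx)(y) = y(x) for y ∈ Y, x ∈ X, is surjective; consequently X has a quotient isomorphic to Y*. -/
noncomputable instance dualOfSubmoduleOfDualTopologicalSpace (X : Type*) [NormedAddCommGroup X]
    [NormedSpace ℝ X] (Y : Submodule ℝ (X →L[ℝ] ℝ)) : TopologicalSpace (Y →L[ℝ] ℝ) :=
  @ContinuousLinearMap.topologicalSpace ℝ ℝ _ _ (RingHom.id ℝ) Y ℝ _ _ _ _ _ _ _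

/-!
Write `J : Y → Y**` for the canonical embedding. For `y ∈ Y` the functional `J y ∘ Q` on `X` is
`y` itself, so `‖J y‖ ≤ ‖J y ∘ Q‖`; by reflexivity this holds for every `ψ ∈ Y**`, i.e. the adjoint
of `Q` is bounded below. A Hahn–Banach separation turns this into density: every `φ ∈ Y*` lies in
the closure of the image under `Q` of the ball of radius `‖φ‖`. Completeness of `X` upgrades
approximate preimages to exact ones by the successive-approximation argument of the open mapping
theorem.
-/

open Function Metric

namespace ContinuousLinearMap

theorem surjective_of_forall_mem_closure_image_closedBall {𝕜 E F : Type*} [NormedField 𝕜]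
    [SeminormedAddCommGroup E] [NormedSpace 𝕜 E] [CompleteSpace E] [NormedAddCommGroup F]
    [NormedSpace 𝕜 F] (T : E →L[𝕜] F) {C : ℝ} (hC : 0 ≤ C)
    (h : ∀ y, y ∈ closure (T '' closedBall 0 (C * ‖y‖))) : Surjective T := by
  have approx : ∀ z, ∃ x, ‖z - T x‖ ≤ 2⁻¹ * ‖z‖ ∧ ‖x‖ ≤ C * ‖z‖ := by
    intro z
    rcases eq_or_ne z 0 with rfl | hz
    · exact ⟨0, by simp⟩
    obtain ⟨_, ⟨x, hx, rfl⟩, hxz⟩ := mem_closure_iff.1 (h z) (2⁻¹ * ‖z‖) (by positivity)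
    exact ⟨x, dist_eq_norm z (T x) ▸ hxz.le, mem_closedBall_zero_iff.1 hx⟩
  choose g hg using approx
  intro y
  let x : ℕ → E := fun n ↦ Nat.rec 0 (fun _ xn ↦ xn + g (y - T xn)) n
  have residual : ∀ n, ‖y - T (x n)‖ ≤ 2⁻¹ ^ n * ‖y‖ := by
    intro n
    induction n with
    | zero => simp [x]
    | succ n ih =>
      calc ‖y - T (x (n + 1))‖ = ‖(y - T (x n)) - T (g (y - T (x n)))‖ := by
            simp only [x, map_add]; abel_nf
        _ ≤ 2⁻¹ * ‖y - T (x n)‖ := (hg _).1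
        _ ≤ 2⁻¹ ^ (n + 1) * ‖y‖ := by rw [pow_succ', mul_assoc]; gcongr
  have step : ∀ n, dist (x n) (x (n + 1)) ≤ C * ‖y‖ * 2⁻¹ ^ n := by
    intro n
    calc dist (x n) (x (n + 1)) = ‖g (y - T (x n))‖ := by simp [x, dist_eq_norm]
      _ ≤ C * (2⁻¹ ^ n * ‖y‖) := (hg _).2.trans (by gcongr; exact residual n)
      _ = C * ‖y‖ * 2⁻¹ ^ n := by ring
  obtain ⟨a, ha⟩ :=
    cauchySeq_tendsto_of_complete (cauchySeq_of_le_geometric _ _ (by norm_num) step)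
  refine ⟨a, tendsto_nhds_unique ((T.continuous.tendsto a).comp ha) ?_⟩
  rw [tendsto_iff_norm_sub_tendsto_zero]
  refine squeeze_zero (fun _ ↦ norm_nonneg _)
    (fun n ↦ (norm_sub_rev _ _).trans_le (residual n)) ?_
  simpa using (tendsto_pow_atTop_nhds_zero_of_lt_one (r := (2⁻¹ : ℝ)) (by norm_num)
    (by norm_num)).mul_const ‖y‖

variable {E F : Type*} [SeminormedAddCommGroup E] [NormedSpace ℝ E] [NormedAddCommGroup F]
  [NormedSpace ℝ F]

theorem mem_closure_image_closedBall_of_norm_le_norm_comp (T : E →L[ℝ] F)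
    (hT : ∀ ψ : StrongDual ℝ F, ‖ψ‖ ≤ ‖ψ ∘L T‖) (y : F) :
    y ∈ closure (T '' closedBall 0 ‖y‖) := by
  rcases eq_or_ne y 0 with rfl | hy
  · exact subset_closure ⟨0, by simp, map_zero T⟩
  by_contra hyK
  have hconvex : Convex ℝ (closure (T '' closedBall 0 ‖y‖)) :=
    ((convex_closedBall 0 _).linear_image T.toLinearMap).closure
  obtain ⟨f, u, hfK, huy⟩ := geometric_hahn_banach_closed_point hconvex isClosed_closure hyK
  have hsep : ∀ x, ‖x‖ ≤ ‖y‖ → f (T x) < u := fun x hx ↦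
    hfK _ (subset_closure ⟨x, mem_closedBall_zero_iff.2 hx, rfl⟩)
  have hy₀ : 0 < ‖y‖ := norm_pos_iff.2 hy
  have hu : 0 ≤ u := by simpa using (hsep 0 (by simp)).le
  -- The ball is symmetric, so `hsep` bounds `|f (T x)|`, not just `f (T x)`.
  have hcomp : ‖f ∘L T‖ ≤ u / ‖y‖ := by
    refine opNorm_le_of_unit_norm (by positivity) fun x hx ↦ ?_
    have h₁ := hsep (‖y‖ • x) (by simp [norm_smul, hx])
    have h₂ := hsep (-(‖y‖ • x)) (by simp [norm_smul, hx])
    simp only [map_neg, map_smul, smul_eq_mul] at h₁ h₂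
    rw [le_div_iff₀ hy₀, Real.norm_eq_abs, ← abs_of_pos hy₀, ← abs_mul, abs_le, comp_apply]
    constructor <;> linarith
  have : f y ≤ u :=
    calc f y ≤ ‖f‖ * ‖y‖ := (le_abs_self _).trans (f.le_opNorm y)
      _ ≤ u / ‖y‖ * ‖y‖ := by gcongr; exact (hT f).trans hcomp
      _ = u := div_mul_cancel₀ u hy₀.ne'
  exact huy.not_ge this

theorem surjective_of_norm_le_norm_comp [CompleteSpace E] (T : E →L[ℝ] F)
    (hT : ∀ ψ : StrongDual ℝ F, ‖ψ‖ ≤ ‖ψ ∘L T‖) : Surjective T :=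
  T.surjective_of_forall_mem_closure_image_closedBall zero_le_one fun y ↦ by
    simpa using T.mem_closure_image_closedBall_of_norm_le_norm_comp hT y

end ContinuousLinearMap

theorem surjective_eval_of_reflexive_subspace_of_dual_general
    (X : Type*) [NormedAddCommGroup X] [NormedSpace ℝ X] [CompleteSpace X]
    (Y : Submodule ℝ (X →L[ℝ] ℝ))
    (hYrefl : Function.Surjective (NormedSpace.inclusionInDoubleDual ℝ Y)) :
    ∃ Q : X →L[ℝ] (Y →L[ℝ] ℝ),
      (∀ (x : X) (y : Y), Q x y = (y : X →L[ℝ] ℝ) x) ∧ Function.Surjective Q := by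
  let Q := (ContinuousLinearMap.compL ℝ Y (X →L[ℝ] ℝ) ℝ).flip Y.subtypeL ∘L
    NormedSpace.inclusionInDoubleDual ℝ X
  refine ⟨Q, fun _ _ ↦ rfl, ?_⟩
  -- Instance search misses the operator norm here: in `StrongDual ℝ Y` the space `Y` carries the
  -- subspace topology, which agrees with its norm topology only after unfolding.
  let : NormedAddCommGroup (StrongDual ℝ Y) :=
    ContinuousLinearMap.toNormedAddCommGroup (E := Y) (σ₁₂ := RingHom.id ℝ)
  refine Q.surjective_of_norm_le_norm_comp fun ψ ↦ ?_
  obtain ⟨y, rfl⟩ := hYrefl ψ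
  have hpullback : NormedSpace.inclusionInDoubleDual ℝ Y y ∘L Q = y := rfl
  exact hpullback ▸ NormedSpace.double_dual_bound ℝ Y y

theorem surjective_eval_of_reflexive_subspace_of_dual
    (X : Type*) [NormedAddCommGroup X] [NormedSpace ℝ X] [CompleteSpace X]
    (Y : Submodule ℝ (X →L[ℝ] ℝ)) (hYclosed : IsClosed (Y : Set (X →L[ℝ] ℝ)))
    (hYinf : ¬ FiniteDimensional ℝ Y)
    (hYrefl : Function.Surjective (NormedSpace.inclusionInDoubleDual ℝ Y)) :
    ∃ Q : X →L[ℝ] (Y →L[ℝ] ℝ),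
      (∀ (x : X) (y : Y), Q x y = (y : X →L[ℝ] ℝ) x) ∧ Function.Surjective Q :=
  surjective_eval_of_reflexive_subspace_of_dual_general X Y hYrefl
end

section
/- If a real Banach space X contains an isomorphic copy of ℓ₁, then X has a quotient isomorphic to ℓ₂. -/
/-!
Let `cₙ` be a dense sequence of finitely supported vectors of `ℓ²` and `fₙ` the sign of the
Rademacher sum `∑ₖ cₙₖ rₖ`, a function of finitely many coin flips with values in `[-1, 1]`.
By Bessel's inequality the vector `vₙ = (𝔼[fₙ rₖ])ₖ` has norm at most `1`, and by Khintchine's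
inequality `⟪cₙ, vₙ⟫ = 𝔼|∑ₖ cₙₖ rₖ| ≥ ‖cₙ‖ / √3`; hence the `vₙ` are norming for `ℓ²`. The map
`eₙ ↦ vₙ` factors through bounded functions of the coin flips, so it extends from the copy of
`ℓ¹` to `X` by applying Hahn–Banach at each point `ω`: on the first `N` flips this gives
operators `X → ℓ²` of uniformly bounded norm, and their coordinatewise limit along an
ultrafilter is an operator `T` with `T eₙ = vₙ`. As the `eₙ` are bounded and the `vₙ` norming,
successive approximation shows that `T` is onto.
-/

/-- `X` contains an isomorphic copy of `Z`: a continuous linear injection from `Z` into `X`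
which is bounded below (an isomorphism onto its image). -/
def ContainsIsomorphicCopy (Z X : Type*) [NormedAddCommGroup Z] [NormedSpace ℝ Z]
    [NormedAddCommGroup X] [NormedSpace ℝ X] : Prop :=
  ∃ f : Z →L[ℝ] X, ∃ c : ℝ, 0 < c ∧ ∀ z : Z, c * ‖z‖ ≤ ‖f z‖

/-- A Banach space `X` has a quotient isomorphic to `Z` iff there exists a surjective
bounded linear operator from `X` onto `Z`. -/
def HasQuotientIsomorphicTo (X Z : Type*) [NormedAddCommGroup X] [NormedSpace ℝ X]
    [NormedAddCommGroup Z] [NormedSpace ℝ Z] : Prop :=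
  ∃ f : X →L[ℝ] Z, Function.Surjective f

open Finset Function Filter Topology
open scoped lp ENNReal InnerProductSpace

noncomputable section

def averageCoord (N : ℕ) : ((ℕ → Bool) → ℝ) →ₗ[ℝ] ((ℕ → Bool) → ℝ) where
  toFun g ω := (g (update ω N true) + g (update ω N false)) / 2
  map_add' g h := by ext ω; simp only [Pi.add_apply]; ring
  map_smul' a g := by ext ω; simp only [Pi.smul_apply, smul_eq_mul, RingHom.id_apply]; ring

/-- The expectation over the uniform measure on the first `N` coordinates of `ω : ℕ → Bool`,
the remaining coordinates being set to `false`. -/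
def cubeAvg : ℕ → ((ℕ → Bool) → ℝ) →ₗ[ℝ] ℝ
  | 0 => LinearMap.proj fun _ => false
  | N + 1 => (cubeAvg N).comp (averageCoord N)

def rademacher (k : ℕ) (ω : ℕ → Bool) : ℝ := if ω k then 1 else -1

def rademacherSum (N : ℕ) (a : ℕ → ℝ) (ω : ℕ → Bool) : ℝ :=
  ∑ k ∈ range N, a k * rademacher k ω

theorem DependsOn.apply_update_of_notMem {ι β : Type*} [DecidableEq ι] {α : ι → Type*}
    {f : (∀ i, α i) → β} {s : Set ι} (hf : DependsOn f s) {i : ι} (hi : i ∉ s) (x : ∀ i, α i)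
    (a : α i) : f (Function.update x i a) = f x :=
  hf fun _ hj => update_of_ne (ne_of_mem_of_not_mem hj hi) _ _

theorem SignType.abs_coe_le_one (s : SignType) : |(s : ℝ)| ≤ 1 := by
  cases s <;> simp [SignType.zero_eq_zero, SignType.neg_eq_neg_one, SignType.pos_eq_one]

section CubeAvg

variable {N : ℕ}

theorem cubeAvg_succ (g : (ℕ → Bool) → ℝ) :
    cubeAvg (N + 1) g = cubeAvg N fun ω => (g (update ω N true) + g (update ω N false)) / 2 :=
  rfl

theorem cubeAvg_const (c : ℝ) : cubeAvg N (fun _ => c) = c := by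
  induction N with
  | zero => rfl
  | succ N ih => rw [cubeAvg_succ, add_self_div_two, ih]

theorem cubeAvg_mono {g h : (ℕ → Bool) → ℝ} (hgh : ∀ ω, g ω ≤ h ω) :
    cubeAvg N g ≤ cubeAvg N h := by
  induction N generalizing g h with
  | zero => exact hgh _
  | succ N ih =>
    rw [cubeAvg_succ, cubeAvg_succ]
    exact ih fun ω => by linarith [hgh (update ω N true), hgh (update ω N false)]

theorem cubeAvg_nonneg {g : (ℕ → Bool) → ℝ} (hg : ∀ ω, 0 ≤ g ω) : 0 ≤ cubeAvg N g := by
  simpa only [cubeAvg_const] using cubeAvg_mono (N := N) (g := fun _ => 0) hg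

theorem cubeAvg_sum {ι : Type*} (s : Finset ι) (g : ι → (ℕ → Bool) → ℝ) :
    cubeAvg N (fun ω => ∑ i ∈ s, g i ω) = ∑ i ∈ s, cubeAvg N (g i) := by
  rw [← map_sum]
  congr 1
  ext ω
  simp only [Finset.sum_apply]

theorem cubeAvg_add (g h : (ℕ → Bool) → ℝ) :
    cubeAvg N (fun ω => g ω + h ω) = cubeAvg N g + cubeAvg N h :=
  map_add (cubeAvg N) g h

theorem cubeAvg_sub (g h : (ℕ → Bool) → ℝ) :
    cubeAvg N (fun ω => g ω - h ω) = cubeAvg N g - cubeAvg N h :=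
  map_sub (cubeAvg N) g h

theorem cubeAvg_const_mul (c : ℝ) (g : (ℕ → Bool) → ℝ) :
    cubeAvg N (fun ω => c * g ω) = c * cubeAvg N g :=
  map_smul (cubeAvg N) c g

theorem cubeAvg_eq_of_dependsOn {g : (ℕ → Bool) → ℝ} {m : ℕ} (hg : DependsOn g (Set.Iio m))
    (hmN : m ≤ N) : cubeAvg N g = cubeAvg m g := by
  induction N, hmN using Nat.le_induction with
  | base => rfl
  | succ N hmN ih =>
    have hN : N ∉ Set.Iio m := by simpa using hmN
    simp only [cubeAvg_succ, hg.apply_update_of_notMem hN, add_self_div_two]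
    exact ih

end CubeAvg

section Rademacher

variable {N k : ℕ}

theorem rademacher_mul_self (ω : ℕ → Bool) : rademacher k ω * rademacher k ω = 1 := by
  unfold rademacher; split_ifs <;> norm_num

theorem DependsOn.mul_rademacher {g : (ℕ → Bool) → ℝ} {s : Set ℕ} (hg : DependsOn g s)
    (hk : k ∈ s) : DependsOn (fun ω => g ω * rademacher k ω) s := fun ω ω' h => by
  simp only [rademacher, h k hk, hg h]

theorem cubeAvg_mul_rademacher_eq_zero {g : (ℕ → Bool) → ℝ} (hg : DependsOn g (Set.Iio k))
    (hk : k < N) : cubeAvg N (fun ω => g ω * rademacher k ω) = 0 := by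
  rw [cubeAvg_eq_of_dependsOn
    ((hg.mono (Set.Iio_subset_Iio k.le_succ)).mul_rademacher (Set.mem_Iio.2 k.lt_succ_self)) hk,
    cubeAvg_succ]
  simp only [hg.apply_update_of_notMem (lt_irrefl k), rademacher, update_self]
  simpa using cubeAvg_const (N := k) 0

theorem cubeAvg_rademacher_mul_rademacher {l : ℕ} (hk : k < N) (hl : l < N) :
    cubeAvg N (fun ω => rademacher k ω * rademacher l ω) = if k = l then 1 else 0 := by
  have dep : ∀ {i j}, i < j → DependsOn (rademacher i) (Set.Iio j) := fun hij ω ω' h => by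
    simp only [rademacher, h _ hij]
  rcases lt_trichotomy k l with hkl | rfl | hkl
  · rw [if_neg hkl.ne, cubeAvg_mul_rademacher_eq_zero (dep hkl) hl]
  · simp only [rademacher_mul_self, cubeAvg_const, if_true]
  · simp only [mul_comm (rademacher k _) (rademacher l _)]
    rw [if_neg hkl.ne', cubeAvg_mul_rademacher_eq_zero (dep hkl) hk]

end Rademacher

section RademacherSum

variable {N : ℕ} (a : ℕ → ℝ)

theorem dependsOn_rademacherSum : DependsOn (rademacherSum N a) (Set.Iio N) := fun ω ω' h =>
  sum_congr rfl fun k hk => by simp only [rademacher, h k (by simpa using hk)]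

theorem rademacherSum_succ_update (ω : ℕ → Bool) (b : Bool) :
    rademacherSum (N + 1) a (update ω N b) = rademacherSum N a ω + a N * if b then 1 else -1 := by
  rw [rademacherSum, sum_range_succ, ← rademacherSum,
    (dependsOn_rademacherSum a).apply_update_of_notMem (lt_irrefl N), rademacher, update_self]

theorem cubeAvg_mul_rademacherSum (g : (ℕ → Bool) → ℝ) :
    cubeAvg N (fun ω => g ω * rademacherSum N a ω)
      = ∑ k ∈ range N, a k * cubeAvg N (fun ω => g ω * rademacher k ω) := by
  simp only [rademacherSum, mul_sum]
  rw [cubeAvg_sum]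
  refine sum_congr rfl fun k _ => ?_
  rw [← cubeAvg_const_mul]
  congr 1
  ext ω
  ring

theorem cubeAvg_rademacher_mul_rademacherSum {k : ℕ} (hk : k < N) :
    cubeAvg N (fun ω => rademacher k ω * rademacherSum N a ω) = a k := by
  rw [cubeAvg_mul_rademacherSum,
    sum_congr rfl fun l hl => by rw [cubeAvg_rademacher_mul_rademacher hk (mem_range.1 hl)]]
  simp [hk]

theorem cubeAvg_rademacherSum_sq :
    cubeAvg N (fun ω => rademacherSum N a ω ^ 2) = ∑ k ∈ range N, a k ^ 2 := by
  simp only [sq]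
  rw [cubeAvg_mul_rademacherSum]
  refine sum_congr rfl fun k hk => ?_
  simp only [mul_comm (rademacherSum N a _) (rademacher k _)]
  rw [cubeAvg_rademacher_mul_rademacherSum a (mem_range.1 hk)]

theorem sum_sq_cubeAvg_mul_rademacher_le (g : (ℕ → Bool) → ℝ) :
    ∑ k ∈ range N, cubeAvg N (fun ω => g ω * rademacher k ω) ^ 2
      ≤ cubeAvg N (fun ω => g ω ^ 2) := by
  set b := fun k => cubeAvg N (fun ω => g ω * rademacher k ω)
  have hexpand : (fun ω => (g ω - rademacherSum N b ω) ^ 2)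
      = fun ω => (g ω ^ 2 - 2 * (g ω * rademacherSum N b ω)) + rademacherSum N b ω ^ 2 := by
    ext ω; ring
  have hnonneg : 0 ≤ cubeAvg N (fun ω => (g ω - rademacherSum N b ω) ^ 2) :=
    cubeAvg_nonneg fun ω => sq_nonneg _
  rw [hexpand, cubeAvg_add, cubeAvg_sub, cubeAvg_const_mul, cubeAvg_mul_rademacherSum,
    cubeAvg_rademacherSum_sq] at hnonneg
  simp only [sq] at hnonneg ⊢
  linarith

theorem cubeAvg_rademacherSum_pow_four_le :
    cubeAvg N (fun ω => rademacherSum N a ω ^ 4) ≤ 3 * (∑ k ∈ range N, a k ^ 2) ^ 2 := by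
  induction N with
  | zero => simp [rademacherSum, cubeAvg_const]
  | succ N ih =>
    have hstep : (fun ω => (rademacherSum (N + 1) a (update ω N true) ^ 4
          + rademacherSum (N + 1) a (update ω N false) ^ 4) / 2)
        = fun ω => (rademacherSum N a ω ^ 4 + 6 * a N ^ 2 * rademacherSum N a ω ^ 2) + a N ^ 4 := by
      ext ω
      simp only [rademacherSum_succ_update, if_true, Bool.false_eq_true, if_false]
      ring
    rw [cubeAvg_succ, hstep, cubeAvg_add, cubeAvg_add, cubeAvg_const_mul, cubeAvg_const,
      cubeAvg_rademacherSum_sq, sum_range_succ]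
    have hB : 0 ≤ ∑ k ∈ range N, a k ^ 2 := sum_nonneg fun k _ => sq_nonneg (a k)
    nlinarith [sq_nonneg (a N)]

theorem sum_sq_le_three_mul_cubeAvg_abs_rademacherSum_sq :
    ∑ k ∈ range N, a k ^ 2 ≤ 3 * cubeAvg N (fun ω => |rademacherSum N a ω|) ^ 2 := by
  set A := cubeAvg N (fun ω => |rademacherSum N a ω|)
  set B := ∑ k ∈ range N, a k ^ 2
  -- `3 s² x² ≤ 2 s³ |x| + x⁴` since the difference is `|x| (|x| - s)² (|x| + 2 s)`
  have key : ∀ s, 0 ≤ s → 3 * s ^ 2 * B ≤ 2 * s ^ 3 * A + 3 * B ^ 2 := fun s hs =>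
    calc 3 * s ^ 2 * B = cubeAvg N (fun ω => 3 * s ^ 2 * rademacherSum N a ω ^ 2) := by
          rw [cubeAvg_const_mul, cubeAvg_rademacherSum_sq]
      _ ≤ cubeAvg N (fun ω => 2 * s ^ 3 * |rademacherSum N a ω| + rademacherSum N a ω ^ 4) :=
          cubeAvg_mono fun ω => by
            have := abs_nonneg (rademacherSum N a ω)
            nlinarith [mul_nonneg (mul_nonneg this (sq_nonneg (|rademacherSum N a ω| - s)))
              (by positivity : 0 ≤ |rademacherSum N a ω| + 2 * s), sq_abs (rademacherSum N a ω)]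
      _ ≤ 2 * s ^ 3 * A + 3 * B ^ 2 := by
          rw [cubeAvg_add, cubeAvg_const_mul]
          linarith [cubeAvg_rademacherSum_pow_four_le a (N := N)]
  have hA : 0 ≤ A := cubeAvg_nonneg fun ω => abs_nonneg _
  by_contra! hlt
  have hB : 0 < B := lt_of_le_of_lt (by positivity) hlt
  rcases hA.eq_or_lt with hA0 | hApos
  · have h := key (B + 1) (by linarith)
    rw [← hA0, mul_zero, zero_add] at h
    nlinarith
  · -- at `s = B / A` the inequality reads `B³ / A² ≤ 3 B²`
    have h := key (B / A) (by positivity)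
    field_simp at h
    nlinarith [mul_lt_mul_of_pos_left hlt (pow_pos hB 2)]

end RademacherSum

theorem lp.inner_sum_single_sum_single {ι : Type*} [DecidableEq ι] (s : Finset ι) (a b : ι → ℝ) :
    ⟪(∑ k ∈ s, lp.single 2 k (a k) : ℓ²(ι, ℝ)), ∑ k ∈ s, lp.single 2 k (b k)⟫_ℝ
      = ∑ k ∈ s, a k * b k := by
  rw [sum_inner]
  refine sum_congr rfl fun k hk => ?_
  rw [lp.inner_single_left, lp.coeFn_sum, Finset.sum_apply]
  simp [Finset.sum_pi_single, hk, mul_comm]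

section Coefficients

def rademacherCoeffs (N : ℕ) : ((ℕ → Bool) → ℝ) →ₗ[ℝ] ℓ²(ℕ, ℝ) :=
  ∑ k ∈ range N,
    (lp.lsingle (𝕜 := ℝ) 2 k).comp ((cubeAvg N).comp (LinearMap.mulRight ℝ (rademacher k)))

variable {N : ℕ}

theorem rademacherCoeffs_apply (g : (ℕ → Bool) → ℝ) :
    rademacherCoeffs N g
      = ∑ k ∈ range N, lp.single 2 k (cubeAvg N fun ω => g ω * rademacher k ω) := by
  simp [rademacherCoeffs, lp.lsingle]
  rfl

theorem norm_rademacherCoeffs_le {g : (ℕ → Bool) → ℝ} {B : ℝ} (hg : ∀ ω, |g ω| ≤ B) :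
    ‖rademacherCoeffs N g‖ ≤ B := by
  have hB : 0 ≤ B := (abs_nonneg _).trans (hg fun _ => false)
  have hsq : ‖rademacherCoeffs N g‖ ^ 2 ≤ B ^ 2 := by
    rw [← real_inner_self_eq_norm_sq, rademacherCoeffs_apply, lp.inner_sum_single_sum_single]
    calc _ ≤ cubeAvg N (fun ω => g ω ^ 2) := by
          simpa only [sq] using sum_sq_cubeAvg_mul_rademacher_le g
      _ ≤ cubeAvg N (fun _ => B ^ 2) :=
          cubeAvg_mono fun ω => sq_le_sq.2 (by rw [abs_of_nonneg hB]; exact hg ω)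
      _ = B ^ 2 := cubeAvg_const _
  exact (pow_le_pow_iff_left₀ (norm_nonneg _) hB two_ne_zero).1 hsq

theorem rademacherCoeffs_eq_of_dependsOn {g : (ℕ → Bool) → ℝ} {m : ℕ}
    (hg : DependsOn g (Set.Iio m)) (hmN : m ≤ N) : rademacherCoeffs N g = rademacherCoeffs m g := by
  rw [rademacherCoeffs_apply, rademacherCoeffs_apply, ← sum_range_add_sum_Ico _ hmN]
  have hlow : ∀ k ∈ range m, cubeAvg N (fun ω => g ω * rademacher k ω)
      = cubeAvg m (fun ω => g ω * rademacher k ω) := fun k hk =>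
    cubeAvg_eq_of_dependsOn (hg.mul_rademacher (by simpa using hk)) hmN
  have hhigh : ∀ k ∈ Ico m N,
      (lp.single 2 k (cubeAvg N fun ω => g ω * rademacher k ω) : ℓ²(ℕ, ℝ)) = 0 :=
    fun k hk => by
      rw [mem_Ico] at hk
      rw [cubeAvg_mul_rademacher_eq_zero (hg.mono (Set.Iio_subset_Iio hk.1)) hk.2, lp.single_zero]
  rw [sum_eq_zero hhigh, add_zero, sum_congr rfl fun k hk => by rw [hlow k hk]]

theorem inner_rademacherCoeffs_sign (m : ℕ) (a : ℕ → ℝ) :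
    ⟪∑ k ∈ range m, lp.single 2 k (a k),
        rademacherCoeffs m fun ω => (SignType.sign (rademacherSum m a ω) : ℝ)⟫_ℝ
      = cubeAvg m (fun ω => |rademacherSum m a ω|) := by
  rw [rademacherCoeffs_apply, lp.inner_sum_single_sum_single, ← cubeAvg_mul_rademacherSum]
  simp only [sign_mul_self]

theorem norm_sum_single_le_two_mul_inner_rademacherCoeffs_sign (m : ℕ) (a : ℕ → ℝ) :
    ‖(∑ k ∈ range m, lp.single 2 k (a k) : ℓ²(ℕ, ℝ))‖
      ≤ 2 * ⟪∑ k ∈ range m, lp.single 2 k (a k),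
          rademacherCoeffs m fun ω => (SignType.sign (rademacherSum m a ω) : ℝ)⟫_ℝ := by
  rw [inner_rademacherCoeffs_sign]
  have hnorm : ‖(∑ k ∈ range m, lp.single 2 k (a k) : ℓ²(ℕ, ℝ))‖ ^ 2 = ∑ k ∈ range m, a k ^ 2 := by
    rw [← real_inner_self_eq_norm_sq, lp.inner_sum_single_sum_single]
    simp only [sq]
  have hA : 0 ≤ cubeAvg m (fun ω => |rademacherSum m a ω|) := cubeAvg_nonneg fun ω => abs_nonneg _
  nlinarith [sum_sq_le_three_mul_cubeAvg_abs_rademacherSum_sq a (N := m),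
    norm_nonneg (∑ k ∈ range m, lp.single 2 k (a k) : ℓ²(ℕ, ℝ))]

end Coefficients

theorem lp.exists_denseRange_sum_single {E : ℕ → Type*} [∀ k, NormedAddCommGroup (E k)]
    [∀ k, TopologicalSpace.SeparableSpace (E k)] {p : ℝ≥0∞} [Fact (1 ≤ p)] (hp : p ≠ ∞) :
    ∃ (m : ℕ → ℕ) (a : ℕ → ∀ k, E k),
      DenseRange fun n => ∑ k ∈ range (m n), lp.single p k (a n k) := by
  let φ : ℕ × (∀ k, E k) → lp E p := fun q => ∑ k ∈ range q.1, lp.single p k (q.2 k)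
  have hφm : ∀ m, Continuous fun a : ∀ k, E k => ∑ k ∈ range m, lp.single p k (a k) := fun m =>
    continuous_finsetSum _ fun k _ =>
      (lp.singleContinuousAddMonoidHom E p k).continuous.comp (continuous_apply k)
  have hφ : Continuous φ := continuous_prod_of_discrete_left.2 hφm
  have hdense : DenseRange φ := fun y => mem_closure_of_tendsto
    (lp.hasSum_single hp y).tendsto_sum_nat (Eventually.of_forall fun m => ⟨(m, ⇑y), rfl⟩)
  let u := TopologicalSpace.denseSeq (ℕ × ∀ k, E k)
  exact ⟨fun n => (u n).1, fun n => (u n).2,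
    hdense.comp (TopologicalSpace.denseRange_denseSeq _) hφ⟩

theorem lp.exists_clm_eq_of_eventually_eq {𝕜 X ι κ : Type*} [NontriviallyNormedField 𝕜]
    [NormedAddCommGroup X] [NormedSpace 𝕜 X] {E : κ → Type*} [∀ k, NormedAddCommGroup (E k)]
    [∀ k, NormedSpace 𝕜 (E k)] [∀ k, ProperSpace (E k)] {p : ℝ≥0∞} [Fact (1 ≤ p)]
    {l : Filter ι} [l.NeBot] (F : ι → X →ₗ[𝕜] lp E p) {C : ℝ} (hF : ∀ i x, ‖F i x‖ ≤ C * ‖x‖) :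
    ∃ T : X →L[𝕜] lp E p, ∀ x y, (∀ᶠ i in l, F i x = y) → T x = y := by
  -- `T x` is the coordinatewise limit of `F i x` along an ultrafilter finer than `l`
  let U := Ultrafilter.of l
  have hp : p ≠ 0 := (zero_lt_one.trans_le Fact.out).ne'
  have hlim : ∀ x, ∃ u : ∀ k, E k, Tendsto (fun i => ⇑(F i x)) U (𝓝 u) := by
    intro x
    have hK := isCompact_univ_pi fun k : κ => isCompact_closedBall (0 : E k) (C * ‖x‖)
    obtain ⟨u, -, hu⟩ := hK.ultrafilter_le_nhds (U.map fun i => ⇑(F i x)) <| by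
      rw [Ultrafilter.coe_map, le_principal_iff]
      exact mem_map.2 <| univ_mem' fun i => Set.mem_univ_pi.2 fun k =>
        mem_closedBall_zero_iff.2 ((lp.norm_apply_le_norm hp _ k).trans (hF i x))
    exact ⟨u, hu⟩
  choose L hL using hlim
  have hunique : ∀ x u, Tendsto (fun i => ⇑(F i x)) U (𝓝 u) → L x = u :=
    fun x u hu => tendsto_nhds_unique (hL x) hu
  have hmem : ∀ x, Memℓp (L x) p := fun x => lp.memℓp_of_tendsto
    (isBounded_iff_forall_norm_le.2 ⟨C * ‖x‖, Set.forall_mem_range.2 fun i => hF i x⟩) (hL x)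
  let T₀ : X →ₗ[𝕜] lp E p :=
    { toFun := fun x => ⟨L x, hmem x⟩
      map_add' := fun x y => lp.ext <| hunique _ _ <|
        ((hL x).add (hL y)).congr fun i => by rw [map_add, lp.coeFn_add]
      map_smul' := fun a x => lp.ext <| hunique _ _ <|
        ((hL x).const_smul a).congr fun i => by rw [map_smul, lp.coeFn_smul] }
  refine ⟨T₀.mkContinuous C fun x =>
    lp.norm_le_of_tendsto (Eventually.of_forall fun i => hF i x) (hL x), fun x y hy => ?_⟩
  refine lp.ext (hunique x y (tendsto_const_nhds.congr' ?_))
  filter_upwards [hy.filter_mono (Ultrafilter.of_le l)] with i hi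
  rw [hi]

theorem ContinuousLinearMap.exists_comp_eq_of_bounded_below {Z X : Type*} [NormedAddCommGroup Z]
    [NormedSpace ℝ Z] [NormedAddCommGroup X] [NormedSpace ℝ X] (j : Z →L[ℝ] X) {c : ℝ}
    (hc : 0 < c) (hj : ∀ z, c * ‖z‖ ≤ ‖j z‖) (ψ : Z →L[ℝ] ℝ) :
    ∃ φ : X →L[ℝ] ℝ, ‖φ‖ ≤ ‖ψ‖ / c ∧ ∀ z, φ (j z) = ψ z := by
  have hinj : Injective j := (injective_iff_map_eq_zero j).2 fun z hz => by
    have := hj z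
    rw [hz, norm_zero] at this
    exact norm_le_zero_iff.1 (by nlinarith [norm_nonneg z])
  let e := LinearEquiv.ofInjective (j : Z →ₗ[ℝ] X) hinj
  let ψ' : LinearMap.range (j : Z →ₗ[ℝ] X) →ₗ[ℝ] ℝ := ψ.toLinearMap ∘ₗ e.symm.toLinearMap
  have hψ' : ∀ y, ‖ψ' y‖ ≤ ‖ψ‖ / c * ‖y‖ := fun y => by
    have hy : j (e.symm y) = y := LinearEquiv.ofInjective_symm_apply (f := (j : Z →ₗ[ℝ] X)) y
    have h1 : c * ‖e.symm y‖ ≤ ‖y‖ := by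
      have := hj (e.symm y)
      rwa [hy] at this
    calc ‖ψ' y‖ ≤ ‖ψ‖ * ‖e.symm y‖ := ψ.le_opNorm _
      _ ≤ ‖ψ‖ / c * ‖y‖ := by
        rw [div_mul_eq_mul_div, le_div_iff₀ hc, mul_assoc, mul_comm ‖e.symm y‖]
        exact mul_le_mul_of_nonneg_left h1 (norm_nonneg ψ)
  obtain ⟨φ, hφ, hφnorm⟩ := exists_extension_norm_eq _ (ψ'.mkContinuous _ hψ')
  refine ⟨φ, hφnorm ▸ LinearMap.mkContinuous_norm_le _ (by positivity) _, fun z => ?_⟩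
  simpa [ψ', e] using hφ (e z)

theorem lp.exists_norm_le_one_apply_single {ι : Type*} [DecidableEq ι] (s : Finset ι)
    (σ : ι → ℝ) (hσ : ∀ i ∈ s, |σ i| ≤ 1) :
    ∃ ψ : ℓ¹(ι, ℝ) →L[ℝ] ℝ, ‖ψ‖ ≤ 1 ∧ ∀ i ∈ s, ψ (lp.single 1 i 1) = σ i := by
  have heval : ∀ i (a : ℓ¹(ι, ℝ)), lp.evalCLM ℝ (fun _ => ℝ) 1 i a = a i := fun _ _ => rfl
  refine ⟨∑ i ∈ s, σ i • lp.evalCLM ℝ (fun _ => ℝ) 1 i,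
    ContinuousLinearMap.opNorm_le_bound _ zero_le_one fun a => ?_, fun i hi => ?_⟩
  · calc ‖(∑ i ∈ s, σ i • lp.evalCLM ℝ (fun _ => ℝ) 1 i) a‖ ≤ ∑ i ∈ s, ‖σ i * a i‖ := by
          simpa [heval] using norm_sum_le s fun i => σ i * a i
      _ ≤ ∑ i ∈ s, ‖a i‖ := sum_le_sum fun i hi => by
          rw [norm_mul]
          exact mul_le_of_le_one_left (norm_nonneg _) (hσ i hi)
      _ ≤ 1 * ‖a‖ := by simpa using lp.sum_rpow_le_norm_rpow (p := 1) (by norm_num) a s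
  · simp [heval, lp.single_apply, Pi.single_apply, hi]

theorem ContinuousLinearMap.surjective_of_exists_approx {𝕜 E F : Type*}
    [NontriviallyNormedField 𝕜] [NormedAddCommGroup E] [NormedSpace 𝕜 E] [CompleteSpace E]
    [NormedAddCommGroup F] [NormedSpace 𝕜 F] (T : E →L[𝕜] F) {C θ : ℝ} (hθ₀ : 0 ≤ θ)
    (hθ : θ < 1) (h : ∀ y, ∃ x, ‖x‖ ≤ C * ‖y‖ ∧ ‖y - T x‖ ≤ θ * ‖y‖) : Surjective T := by
  choose g hgC hgθ using h
  intro y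
  let r : ℕ → F := fun n => (fun z => z - T (g z))^[n] y
  have hr_succ : ∀ n, r (n + 1) = r n - T (g (r n)) := fun n => iterate_succ_apply' _ n y
  have hr : ∀ n, ‖r n‖ ≤ θ ^ n * ‖y‖ := by
    intro n
    induction n with
    | zero => simp [r]
    | succ n ih =>
      rw [hr_succ, pow_succ', mul_assoc]
      exact (hgθ _).trans (mul_le_mul_of_nonneg_left ih hθ₀)
  have hsum : Summable fun n => g (r n) :=
    .of_norm_bounded ((summable_geometric_of_lt_one hθ₀ hθ).mul_left (|C| * ‖y‖)) fun n =>
      calc ‖g (r n)‖ ≤ C * ‖r n‖ := hgC _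
        _ ≤ |C| * (θ ^ n * ‖y‖) :=
          mul_le_mul (le_abs_self C) (hr n) (norm_nonneg _) (abs_nonneg C)
        _ = |C| * ‖y‖ * θ ^ n := by ring
  have hpartial : ∀ N, ∑ n ∈ range N, T (g (r n)) = y - r N := by
    intro N
    induction N with
    | zero => simp [r]
    | succ N ih => rw [sum_range_succ, ih, hr_succ]; abel
  have hr0 : Tendsto r atTop (𝓝 0) := squeeze_zero_norm hr <| by
    simpa using (tendsto_pow_atTop_nhds_zero_of_lt_one hθ₀ hθ).mul_const ‖y‖
  refine ⟨∑' n, g (r n), tendsto_nhds_unique (hsum.hasSum.mapL T).tendsto_sum_nat ?_⟩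
  simpa [hpartial] using (tendsto_const_nhds (x := y)).sub hr0

theorem ContinuousLinearMap.surjective_of_forall_exists_le_inner {E H ι : Type*}
    [NormedAddCommGroup E] [NormedSpace ℝ E] [CompleteSpace E] [NormedAddCommGroup H]
    [InnerProductSpace ℝ H] (T : E →L[ℝ] H) (x : ι → E) {M K : ℝ} (hx : ∀ i, ‖x i‖ ≤ M)
    (hTx : ∀ i, ‖T (x i)‖ ≤ 1) (hK : 0 < K) (h : ∀ y, ∃ i, ‖y‖ ≤ K * ⟪y, T (x i)⟫_ℝ) :
    Surjective T := by
  refine T.surjective_of_exists_approx (C := M) (Real.sqrt_nonneg (1 - 1 / K ^ 2)) ?_ fun y => ?_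
  · rw [Real.sqrt_lt' one_pos]
    have : 0 < 1 / K ^ 2 := by positivity
    linarith
  obtain ⟨i, hi⟩ := h y
  set t := ⟪y, T (x i)⟫_ℝ
  have ht : |t| ≤ ‖y‖ := (abs_real_inner_le_norm _ _).trans <| by
    simpa using mul_le_mul_of_nonneg_left (hTx i) (norm_nonneg y)
  refine ⟨t • x i, ?_, ?_⟩
  · rw [norm_smul, Real.norm_eq_abs, mul_comm M]
    exact mul_le_mul ht (hx i) (norm_nonneg _) (norm_nonneg _)
  -- `T (x i)` removes at least the component `t ≥ ‖y‖ / K` of `y`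
  have hsq : ‖y - T (t • x i)‖ ^ 2 ≤ (1 - 1 / K ^ 2) * ‖y‖ ^ 2 := by
    rw [map_smul, @norm_sub_sq_real, real_inner_smul_right, norm_smul, Real.norm_eq_abs, mul_pow,
      sq_abs]
    have h1 : ‖T (x i)‖ ^ 2 ≤ 1 := pow_le_one₀ (norm_nonneg _) (hTx i)
    have h2 : ‖y‖ ^ 2 / K ^ 2 ≤ t ^ 2 := by
      rw [div_le_iff₀ (by positivity)]
      nlinarith [norm_nonneg y]
    have h3 : t ^ 2 * ‖T (x i)‖ ^ 2 ≤ t ^ 2 := mul_le_of_le_one_right (sq_nonneg t) h1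
    rw [sub_mul, one_mul, one_div, ← div_eq_inv_mul]
    nlinarith
  calc ‖y - T (t • x i)‖ = √(‖y - T (t • x i)‖ ^ 2) := (Real.sqrt_sq (norm_nonneg _)).symm
    _ ≤ √((1 - 1 / K ^ 2) * ‖y‖ ^ 2) := Real.sqrt_le_sqrt hsq
    _ = √(1 - 1 / K ^ 2) * ‖y‖ := by
      rw [Real.sqrt_mul' _ (sq_nonneg _), Real.sqrt_sq (norm_nonneg _)]

theorem exists_norm_le_inner_of_denseRange {H ι : Type*} [NormedAddCommGroup H]
    [InnerProductSpace ℝ H] {c v : ι → H} (hc : DenseRange c) (hv : ∀ i, ‖v i‖ ≤ 1) {K : ℝ}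
    (hK : 0 < K) (hcv : ∀ i, ‖c i‖ ≤ K * ⟪c i, v i⟫_ℝ) (y : H) :
    ∃ i, ‖y‖ ≤ 2 * K * ⟪y, v i⟫_ℝ := by
  rcases eq_or_ne y 0 with rfl | hy
  · obtain ⟨i, -⟩ := hc.exists_dist_lt 0 one_pos
    exact ⟨i, by simp⟩
  obtain ⟨i, hi⟩ := hc.exists_dist_lt y (ε := ‖y‖ / (2 * (K + 1))) (by positivity)
  refine ⟨i, ?_⟩
  rw [dist_eq_norm, lt_div_iff₀ (by positivity)] at hi
  have h1 : ‖y‖ - ‖c i‖ ≤ ‖y - c i‖ := norm_sub_norm_le y (c i)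
  have h2 : |⟪y - c i, v i⟫_ℝ| ≤ ‖y - c i‖ := (abs_real_inner_le_norm _ _).trans <| by
    simpa using mul_le_mul_of_nonneg_left (hv i) (norm_nonneg (y - c i))
  have h3 : ⟪c i, v i⟫_ℝ ≤ ⟪y, v i⟫_ℝ + ‖y - c i‖ := by
    rw [inner_sub_left] at h2
    linarith [(abs_le.1 h2).1]
  have h4 := mul_le_mul_of_nonneg_left h3 hK.le
  nlinarith [hcv i]

theorem exists_clm_apply_single_eq_rademacherCoeffs {X : Type*} [NormedAddCommGroup X]
    [NormedSpace ℝ X] (j : ℓ¹(ℕ, ℝ) →L[ℝ] X) {c : ℝ} (hc : 0 < c)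
    (hj : ∀ z, c * ‖z‖ ≤ ‖j z‖) (f : ℕ → (ℕ → Bool) → ℝ) (hf : ∀ n ω, |f n ω| ≤ 1)
    (m : ℕ → ℕ) (hfm : ∀ n, DependsOn (f n) (Set.Iio (m n))) :
    ∃ T : X →L[ℝ] ℓ²(ℕ, ℝ), ∀ n, T (j (lp.single 1 n 1)) = rademacherCoeffs (m n) (f n) := by
  have hΦ : ∀ (N : ℕ) (ω : ℕ → Bool), ∃ φ : X →L[ℝ] ℝ,
      ‖φ‖ ≤ c⁻¹ ∧ ∀ n < N, φ (j (lp.single 1 n 1)) = f n ω := by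
    intro N ω
    obtain ⟨ψ, hψ, hψf⟩ :=
      lp.exists_norm_le_one_apply_single (range N) (fun n => f n ω) fun n _ => hf n ω
    obtain ⟨φ, hφ, hφψ⟩ := j.exists_comp_eq_of_bounded_below hc hj ψ
    refine ⟨φ, hφ.trans ?_, fun n hn => (hφψ _).trans (hψf n (mem_range.2 hn))⟩
    rw [inv_eq_one_div]
    gcongr
  choose Φ hΦnorm hΦ using hΦ
  let F : ℕ → X →ₗ[ℝ] ℓ²(ℕ, ℝ) := fun N =>
    rademacherCoeffs N ∘ₗ LinearMap.pi fun ω => (Φ N ω : X →ₗ[ℝ] ℝ)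
  have hF : ∀ N x, ‖F N x‖ ≤ c⁻¹ * ‖x‖ := fun N x => norm_rademacherCoeffs_le fun ω => by
    rw [← Real.norm_eq_abs]
    exact (Φ N ω).le_of_opNorm_le (hΦnorm N ω) x
  obtain ⟨T, hT⟩ := lp.exists_clm_eq_of_eventually_eq (l := atTop) F hF
  refine ⟨T, fun n => hT _ _ ?_⟩
  filter_upwards [eventually_gt_atTop n, eventually_ge_atTop (m n)] with N hnN hmN
  calc F N (j (lp.single 1 n 1)) = rademacherCoeffs N (f n) :=
        congrArg _ (funext fun ω => hΦ N ω n hnN)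
    _ = rademacherCoeffs (m n) (f n) := rademacherCoeffs_eq_of_dependsOn (hfm n) hmN

theorem quotient_ell2_of_contains_ell1
    (X : Type*) [NormedAddCommGroup X] [NormedSpace ℝ X] [CompleteSpace X]
    (h : ContainsIsomorphicCopy (lp (fun _ : ℕ => ℝ) 1) X) :
    HasQuotientIsomorphicTo X (lp (fun _ : ℕ => ℝ) 2) := by
  obtain ⟨j, c, hc, hj⟩ := h
  obtain ⟨m, a, hdense⟩ :=
    lp.exists_denseRange_sum_single (E := fun _ : ℕ => ℝ) (p := 2) ENNReal.ofNat_ne_top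
  let f : ℕ → (ℕ → Bool) → ℝ := fun n ω => SignType.sign (rademacherSum (m n) (a n) ω)
  have hf : ∀ n ω, |f n ω| ≤ 1 := fun n ω => SignType.abs_coe_le_one _
  have hfm : ∀ n, DependsOn (f n) (Set.Iio (m n)) := fun n ω ω' hωω' => by
    simp only [f, dependsOn_rademacherSum (a n) hωω']
  obtain ⟨T, hT⟩ := exists_clm_apply_single_eq_rademacherCoeffs j hc hj f hf m hfm
  have hv : ∀ n, ‖T (j (lp.single 1 n 1))‖ ≤ 1 := fun n => hT n ▸ norm_rademacherCoeffs_le (hf n)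
  refine ⟨T, T.surjective_of_forall_exists_le_inner (fun n => j (lp.single 1 n 1)) (M := ‖j‖)
    (fun n => ?_) hv (by norm_num : (0 : ℝ) < 2 * 2) fun y => ?_⟩
  · simpa using j.le_opNorm (lp.single 1 n 1)
  · refine exists_norm_le_inner_of_denseRange hdense hv two_pos (fun n => ?_) y
    rw [hT]
    exact norm_sum_single_le_two_mul_inner_rademacherCoeffs_sign (m n) (a n)
end
end

section
/- If X is a real Banach space that is weakly sequentially complete and not reflexive, then X contains an isomorphic copy of ℓ₁. -/
open Filter Topology

/-!
Non-reflexivity gives `F ∈ X**` at positive distance `4δ` from `X`. Alternating Hahn–Banach with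
the local Goldstine theorem produces bounded `xₘ ∈ X` and `fᵢ ∈ X*` with `fᵢ xₘ ≥ 2δ` for `i ≤ m`
and `|fᵢ xₘ| ≤ δ` for `m < i`. A weak-* cluster point of `(fᵢ)` shows that no subsequence of `(xₘ)`
converges weakly, so by weak sequential completeness none is weakly Cauchy.

Rosenthal's ℓ₁ theorem then applies. A diagonal argument over rational thresholds gives `r < s`
and `K` such that along every further subsequence some functional of norm `≤ K` is infinitely often
below `r` and infinitely often above `s`. Nash-Williams' theorem, applied to the finite sets on
which such a functional can alternate between the two sides, yields a subsequence along which every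
finite sign pattern is realised; testing `∑ aᵢ xᵢ` against two opposite patterns gives
`‖∑ aᵢ xᵢ‖ ≥ (s - r) / (2K) · ∑ |aᵢ|`.
-/

open Metric NormedSpace

namespace NashWilliams

def tail (N : Set ℕ) (s : Finset ℕ) : Set ℕ := {n ∈ N | ∀ m ∈ s, m < n}

lemma tail_subset (N : Set ℕ) (s : Finset ℕ) : tail N s ⊆ N := fun _ h => h.1

@[simp] lemma tail_empty (N : Set ℕ) : tail N ∅ = N := by simp [tail]

lemma tail_infinite {N : Set ℕ} (hN : N.Infinite) (s : Finset ℕ) : (tail N s).Infinite :=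
  (hN.sdiff (Set.finite_Iic (s.sup id))).mono fun _ hn =>
    ⟨hn.1, fun _ hm => (Finset.le_sup (f := id) hm).trans_lt (not_le.1 hn.2)⟩

lemma exists_subset_forall_mem_finset (Q : Finset ℕ → Set ℕ → Prop)
    (hQ : ∀ s M M', M' ⊆ M → Q s M → Q s M')
    (hdense : ∀ s M, M.Infinite → ∃ M' ⊆ M, M'.Infinite ∧ Q s M') (L : Finset (Finset ℕ))
    {M : Set ℕ} (hM : M.Infinite) : ∃ M' ⊆ M, M'.Infinite ∧ ∀ s ∈ L, Q s M' := by
  induction L using Finset.induction_on generalizing M with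
  | empty => exact ⟨M, subset_rfl, hM, by simp⟩
  | insert s L _ ih =>
    obtain ⟨M₁, h₁, hM₁, hs⟩ := hdense s M hM
    obtain ⟨M₂, h₂, hM₂, hL⟩ := ih hM₁
    exact ⟨M₂, h₂.trans h₁, hM₂, by simpa [hQ s M₁ M₂ h₂ hs] using hL⟩

theorem exists_fusion (Q : Finset ℕ → Set ℕ → Prop) (hQ : ∀ s M M', M' ⊆ M → Q s M → Q s M')
    (hdense : ∀ s M, M.Infinite → ∃ M' ⊆ M, M'.Infinite ∧ Q s M') {M : Set ℕ}
    (hM : M.Infinite) : ∃ N ⊆ M, N.Infinite ∧ ∀ s : Finset ℕ, ↑s ⊆ N → Q s (tail N s) := by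
  -- Each step removes the minimum `a` of the current set and secures `Q s` for every `s ⊆ [0, a]`,
  -- not only for sets of previously chosen minima, so no history needs to be carried along.
  have hstep : ∀ M : {M : Set ℕ // M.Infinite}, ∃ M' : {M : Set ℕ // M.Infinite},
      M'.1 ⊆ tail M.1 {sInf M.1} ∧ ∀ s ⊆ Finset.range (sInf M.1 + 1), Q s M'.1 := by
    rintro ⟨M, hM⟩
    obtain ⟨M', h, hM', hQ'⟩ :=
      exists_subset_forall_mem_finset Q hQ hdense (Finset.range (sInf M + 1)).powerset
        (tail_infinite hM {sInf M})
    exact ⟨⟨M', hM'⟩, h, fun s hs => hQ' s (Finset.mem_powerset.2 hs)⟩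
  choose next hnext using hstep
  obtain ⟨M₀, hM₀M, hM₀, hQ₀⟩ := hdense ∅ M hM
  set seq : ℕ → {M : Set ℕ // M.Infinite} := fun k => next^[k] ⟨M₀, hM₀⟩
  set a : ℕ → ℕ := fun k => sInf (seq k).1
  have hseq : ∀ k, seq (k + 1) = next (seq k) := fun k => Function.iterate_succ_apply' _ _ _
  have hanti : Antitone fun k => (seq k).1 := antitone_nat_of_succ_le fun k => by
    rw [hseq]; exact (hnext _).1.trans (tail_subset _ _)
  have ha_mem : ∀ k, a k ∈ (seq k).1 := fun k => Nat.sInf_mem (seq k).2.nonempty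
  have ha : StrictMono a := strictMono_nat_of_lt_succ fun k => by
    have := (hnext (seq k)).1 (hseq k ▸ ha_mem (k + 1))
    exact this.2 _ (Finset.mem_singleton_self _)
  refine ⟨Set.range a, ?_, Set.infinite_range_of_injective ha.injective, fun s hs => ?_⟩
  · rintro _ ⟨k, rfl⟩
    exact hM₀M (hanti (Nat.zero_le k) (ha_mem k))
  rcases s.eq_empty_or_nonempty with rfl | hne
  · refine hQ _ _ _ ?_ hQ₀
    rintro _ ⟨⟨k, rfl⟩, -⟩
    exact hanti (Nat.zero_le k) (ha_mem k)
  obtain ⟨j, hj⟩ := hs (s.max'_mem hne)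
  refine hQ _ _ _ ?_ (hseq j ▸ (hnext (seq j)).2 s fun m hm => ?_)
  · rintro _ ⟨⟨k, rfl⟩, hk⟩
    have : j < k := ha.lt_iff_lt.1 (hj ▸ hk _ (s.max'_mem hne))
    exact hanti this (ha_mem k)
  · exact Finset.mem_range_succ_iff.2 (hj ▸ s.le_max' m hm : m ≤ a j)

variable (F : Finset ℕ → Prop)

def Accepts (s : Finset ℕ) (M : Set ℕ) : Prop :=
  ∀ p : ℕ → ℕ, StrictMono p → (∀ i, p i ∈ M) → ∃ k, F (s ∪ (Finset.range k).image p)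

def Rejects (s : Finset ℕ) (M : Set ℕ) : Prop :=
  ∀ M' ⊆ M, M'.Infinite → ¬ Accepts F s M'

variable {F}

lemma Accepts.mono {s : Finset ℕ} {M M' : Set ℕ} (h : Accepts F s M) (hM : M' ⊆ M) :
    Accepts F s M' := fun p hp hpM => h p hp fun i => hM (hpM i)

lemma Rejects.mono {s : Finset ℕ} {M M' : Set ℕ} (h : Rejects F s M) (hM : M' ⊆ M) :
    Rejects F s M' := fun M'' h' => h M'' (h'.trans hM)

lemma accepts_of {s : Finset ℕ} (hs : F s) (M : Set ℕ) : Accepts F s M :=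
  fun _ _ _ => ⟨0, by simpa using hs⟩

lemma exists_accepts_or_rejects (s : Finset ℕ) {M : Set ℕ} (hM : M.Infinite) :
    ∃ M' ⊆ M, M'.Infinite ∧ (Accepts F s M' ∨ Rejects F s M') := by
  by_cases h : ∃ M' ⊆ M, M'.Infinite ∧ Accepts F s M'
  · obtain ⟨M', hM', hinf, hacc⟩ := h
    exact ⟨M', hM', hinf, Or.inl hacc⟩
  · push Not at h
    exact ⟨M, subset_rfl, hM, Or.inr h⟩

lemma finite_setOf_not_rejects_insert {N : Set ℕ}
    (hN : ∀ s : Finset ℕ, ↑s ⊆ N → Accepts F s (tail N s) ∨ Rejects F s (tail N s))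
    {s : Finset ℕ} (hsN : ↑s ⊆ N) (hs : Rejects F s (tail N s)) :
    {m ∈ tail N s | ¬ Rejects F (insert m s) (tail N (insert m s))}.Finite := by
  -- Otherwise these `m` form an infinite subset of `tail N s` accepting `s`.
  by_contra hinf
  refine hs _ (fun m hm => hm.1) (Set.not_finite.1 hinf) fun p hp hpB => ?_
  have hins : ↑(insert (p 0) s) ⊆ N := by
    rw [Finset.coe_insert]
    exact Set.insert_subset (hpB 0).1.1 hsN
  have hacc := (hN _ hins).resolve_right (hpB 0).2
  obtain ⟨k, hk⟩ := hacc (p ∘ Nat.succ) (hp.comp (strictMono_id.add_const 1)) fun i =>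
    ⟨(hpB (i + 1)).1.1, by
      simpa [Finset.forall_mem_insert, hp (Nat.succ_pos i)] using (hpB (i + 1)).1.2⟩
  refine ⟨k + 1, ?_⟩
  rwa [Finset.range_add_one', Finset.image_insert, Finset.map_eq_image, Finset.image_image,
    Finset.union_insert, ← Finset.insert_union]

theorem exists_infinite_subset (F : Finset ℕ → Prop) {M : Set ℕ} (hM : M.Infinite) :
    ∃ N ⊆ M, N.Infinite ∧ ((∀ s : Finset ℕ, ↑s ⊆ N → ¬ F s) ∨
      ∀ p : ℕ → ℕ, StrictMono p → (∀ i, p i ∈ N) → ∃ k, F ((Finset.range k).image p)) := by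
  obtain ⟨N, hNM, hN, hdec⟩ := exists_fusion (fun s M => Accepts F s M ∨ Rejects F s M)
    (fun s M M' h => Or.imp (·.mono h) (·.mono h)) (fun s M hM => exists_accepts_or_rejects s hM) hM
  rcases hdec ∅ (by simp) with hacc | hrej
  · exact ⟨N, hNM, hN, Or.inr fun p hp hpN => by simpa using hacc.mono (tail_empty N).ge p hp hpN⟩
  set R : Finset ℕ → Prop := fun s => Rejects F s (tail N s)
  obtain ⟨N', hN'N, hN', hgrow⟩ := exists_fusion
    (fun s M => ↑s ⊆ N → R s → ∀ m ∈ M, m ∈ tail N s → R (insert m s))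
    (fun s M M' h hQ hsN hs m hm => hQ hsN hs m (h hm))
    (fun s M hM => by
      by_cases hs : ↑s ⊆ N ∧ R s
      · exact ⟨M \ _, Set.sdiff_subset, hM.sdiff (finite_setOf_not_rejects_insert hdec hs.1 hs.2),
          fun _ _ m hm hmt => not_not.1 fun h => hm.2 ⟨hmt, h⟩⟩
      · exact ⟨M, subset_rfl, hM, fun hsN hR => absurd ⟨hsN, hR⟩ hs⟩) hN
  have hR : ∀ s : Finset ℕ, ↑s ⊆ N' → R s := by
    intro s
    induction s using Finset.induction_on_max with
    | empty => exact fun _ => by simpa [R] using hrej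
    | insert a t hlt ih =>
      intro hs
      rw [Finset.coe_insert, Set.insert_subset_iff] at hs
      exact hgrow t (hs.2) (hs.2.trans hN'N) (ih hs.2) a ⟨hs.1, hlt⟩ ⟨hN'N hs.1, hlt⟩
  refine ⟨N', hN'N.trans hNM, hN', Or.inl fun s hs hFs => ?_⟩
  exact hR s hs _ subset_rfl (tail_infinite hN s) (accepts_of hFs _)

end NashWilliams

section Alternation

variable {T : Type*} (A B : ℕ → Set T)

def BooleanIndependent : Prop :=
  ∀ (S : Set ℕ) (k : ℕ), ∃ t, ∀ i < k, (i ∈ S → t ∈ A i) ∧ (i ∉ S → t ∈ B i)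

/-- `(s.filter (· < a)).card` is the position of `a` in the increasing enumeration of `s`. -/
def alternatingSet (s : Finset ℕ) : Set T :=
  {t | ∀ a ∈ s, t ∈ if Even (s.filter (· < a)).card then A a else B a}

variable {A B}

lemma mem_alternatingSet_image_range {p : ℕ → ℕ} (hp : StrictMono p) {k : ℕ} {t : T} :
    t ∈ alternatingSet A B ((Finset.range k).image p) ↔
      ∀ j < k, t ∈ if Even j then A (p j) else B (p j) := by
  have hpos : ∀ j < k, (((Finset.range k).image p).filter (· < p j)).card = j := by
    intro j hj
    rw [Finset.filter_image, Finset.card_image_of_injective _ hp.injective]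
    convert Finset.card_range j using 2
    ext i
    simp only [Finset.mem_filter, Finset.mem_range, hp.lt_iff_lt]
    omega
  simp only [alternatingSet, Finset.forall_mem_image, Finset.mem_range]
  exact forall₂_congr fun j hj => by rw [hpos j hj]

theorem exists_strictMono_booleanIndependent_of_nonempty {N : Set ℕ} (hN : N.Infinite)
    (h : ∀ s : Finset ℕ, ↑s ⊆ N → (alternatingSet A B s).Nonempty) :
    ∃ y : ℕ → ℕ, StrictMono y ∧ BooleanIndependent (fun i => A (y i)) (fun i => B (y i)) := by
  classical
  set ν := Nat.nth (· ∈ N)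
  have hν : StrictMono ν := Nat.nth_strictMono hN
  refine ⟨fun i => ν (3 * i + 1), hν.comp fun a b h => by omega, fun S k => ?_⟩
  -- Position `j` of the finite set below is filled by `ν (q j)`; `3 * i + 1` lands at position
  -- `2 * i` or `2 * i + 1` according as `i ∈ S`, one of `3 * i`, `3 * i + 2` serving as padding.
  set q : ℕ → ℕ := fun j => 3 * (j / 2) + j % 2 + if j / 2 ∈ S then 1 else 0
  have hq : StrictMono q := strictMono_nat_of_lt_succ fun j => by
    obtain ⟨i, rfl | rfl⟩ := Nat.even_or_odd' j
    · simp only [q, show (2 * i) / 2 = i by omega, show (2 * i + 1) / 2 = i by omega]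
      split_ifs <;> omega
    · simp only [q, show (2 * i + 1) / 2 = i by omega, show (2 * i + 1 + 1) / 2 = i + 1 by omega]
      split_ifs <;> omega
  obtain ⟨t, ht⟩ := h ((Finset.range (2 * k)).image (ν ∘ q)) fun _ hx => by
    obtain ⟨j, -, rfl⟩ := Finset.mem_image.1 hx
    exact Nat.nth_mem_of_infinite hN _
  refine ⟨t, fun i hi => ?_⟩
  have ht' := (mem_alternatingSet_image_range (hν.comp hq)).1 ht
  by_cases hiS : i ∈ S
  · have h := ht' (2 * i) (by omega)
    have hq' : q (2 * i) = 3 * i + 1 := by simp [q, hiS]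
    simp only [Function.comp, hq', even_two_mul, if_true] at h
    exact ⟨fun _ => h, fun h' => absurd hiS h'⟩
  · have h := ht' (2 * i + 1) (by omega)
    have hq' : q (2 * i + 1) = 3 * i + 1 := by simp [q, hiS, show (2 * i + 1) / 2 = i by omega]
    simp only [Function.comp, hq', Nat.not_even_bit1, if_false] at h
    exact ⟨fun h' => absurd h' hiS, fun _ => h⟩

theorem exists_strictMono_booleanIndependent {M : Set ℕ} (hM : M.Infinite)
    (hosc : ∀ N ⊆ M, N.Infinite → ∃ t, {n ∈ N | t ∈ A n}.Infinite ∧ {n ∈ N | t ∈ B n}.Infinite) :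
    ∃ y : ℕ → ℕ, StrictMono y ∧ BooleanIndependent (fun i => A (y i)) (fun i => B (y i)) := by
  obtain ⟨N, hNM, hN, hall | hseg⟩ :=
    NashWilliams.exists_infinite_subset (fun s => alternatingSet A B s = ∅) hM
  · exact exists_strictMono_booleanIndependent_of_nonempty hN fun s hs =>
      Set.nonempty_iff_ne_empty.2 (hall s hs)
  obtain ⟨t, htA, htB⟩ := hosc N hNM hN
  obtain ⟨p, hp, hpN⟩ := extraction_forall_of_frequently
    (P := fun j n => n ∈ N ∧ t ∈ if Even j then A n else B n) fun j => by
      by_cases hj : Even j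
      · simpa only [hj, if_true] using Nat.frequently_atTop_iff_infinite.2 htA
      · simpa only [hj, if_false] using Nat.frequently_atTop_iff_infinite.2 htB
  obtain ⟨k, hk⟩ := hseg p hp fun i => (hpN i).1
  exact ((Set.eq_empty_iff_forall_notMem.1 hk) t
    ((mem_alternatingSet_image_range hp).2 fun j _ => (hpN j).2)).elim

end Alternation

theorem exists_infinite_forall_of_countable {ι : Type*} [Countable ι] (P : ι → Set ℕ → Prop)
    (hP : ∀ i M D, P i M → (D \ M).Finite → P i D)
    (h : ∀ i M, M.Infinite → ∃ M' ⊆ M, M'.Infinite ∧ P i M') :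
    ∃ D : Set ℕ, D.Infinite ∧ ∀ i, P i D := by
  cases isEmpty_or_nonempty ι
  · exact ⟨Set.univ, Set.infinite_univ, isEmptyElim⟩
  obtain ⟨τ, hτ⟩ := exists_surjective_nat ι
  choose g hgM hg hgP using h
  let Ms : ℕ → {M : Set ℕ // M.Infinite} := fun k =>
    Nat.rec ⟨Set.univ, Set.infinite_univ⟩ (fun k M => ⟨g (τ k) M.1 M.2, hg _ _ M.2⟩) k
  have hanti : Antitone fun k => (Ms k).1 := antitone_nat_of_succ_le fun k => hgM _ _ (Ms k).2
  choose n hn hkn using fun k => (Ms k).2.exists_gt k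
  refine ⟨Set.range n, Set.infinite_of_forall_exists_gt fun k => ⟨n k, ⟨k, rfl⟩, hkn k⟩,
    fun i => ?_⟩
  obtain ⟨k, rfl⟩ := hτ i
  refine hP _ _ _ (hgP (τ k) (Ms k).1 (Ms k).2) (((Set.finite_Iio (k + 1)).image n).subset ?_)
  rintro _ ⟨⟨j, rfl⟩, hj⟩
  exact ⟨j, not_le.1 fun hjk => hj (hanti hjk (hn j)), rfl⟩

lemma exists_rat_frequently_lt_and_frequently_gt {v : ℕ → ℝ} {B : ℝ} (hv : ∀ n, |v n| ≤ B)
    (h : ¬ ∃ l, Tendsto v atTop (𝓝 l)) :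
    ∃ r s : ℚ, r < s ∧ (∃ᶠ n in atTop, v n < r) ∧ ∃ᶠ n in atTop, (s : ℝ) < v n := by
  have hle : IsBoundedUnder (· ≤ ·) atTop v := isBoundedUnder_of ⟨B, fun n => (abs_le.1 (hv n)).2⟩
  have hge : IsBoundedUnder (· ≥ ·) atTop v := isBoundedUnder_of ⟨-B, fun n => (abs_le.1 (hv n)).1⟩
  have hlt : liminf v atTop < limsup v atTop := (liminf_le_limsup hle hge).lt_of_ne fun heq =>
    h ⟨_, tendsto_of_liminf_eq_limsup heq rfl hle hge⟩
  obtain ⟨r, h₁, h₂⟩ := exists_rat_btwn hlt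
  obtain ⟨s, h₃, h₄⟩ := exists_rat_btwn h₂
  exact ⟨r, s, by exact_mod_cast h₃, frequently_lt_of_liminf_lt hle.isCoboundedUnder_ge h₁,
    frequently_lt_of_lt_limsup hge.isCoboundedUnder_le h₄⟩

section Oscillation

variable {X : Type*} [NormedAddCommGroup X] [NormedSpace ℝ X]

def Oscillates (u : ℕ → X) (K r s : ℝ) (M : Set ℕ) : Prop :=
  ∃ t ∈ closedBall (0 : StrongDual ℝ X) K,
    {m ∈ M | t (u m) < r}.Infinite ∧ {m ∈ M | s < t (u m)}.Infinite

lemma Oscillates.of_diff_finite {u : ℕ → X} {K r s : ℝ} {D M : Set ℕ}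
    (h : Oscillates u K r s D) (hD : (D \ M).Finite) : Oscillates u K r s M := by
  obtain ⟨t, ht, h₁, h₂⟩ := h
  have hM : ∀ {m}, m ∈ D → m ∉ D \ M → m ∈ M := fun hmD hm => not_not.1 fun h => hm ⟨hmD, h⟩
  exact ⟨t, ht, (h₁.sdiff hD).mono fun m hm => ⟨hM hm.1.1 hm.2, hm.1.2⟩,
    (h₂.sdiff hD).mono fun m hm => ⟨hM hm.1.1 hm.2, hm.1.2⟩⟩

theorem exists_forall_oscillates {u : ℕ → X} {C : ℝ} (hu : ∀ n, ‖u n‖ ≤ C)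
    (h : ∀ φ : ℕ → ℕ, StrictMono φ →
      ∃ f : StrongDual ℝ X, ¬ ∃ l, Tendsto (fun n => f (u (φ n))) atTop (𝓝 l)) :
    ∃ M : Set ℕ, M.Infinite ∧ ∃ K r s : ℝ, 0 < K ∧ r < s ∧
      ∀ N ⊆ M, N.Infinite → Oscillates u K r s N := by
  -- Otherwise diagonalising over rational thresholds gives `D` along which nothing oscillates, yet
  -- a functional not converging along `D` does.
  by_contra! hcon
  obtain ⟨D, hD, hDosc⟩ := exists_infinite_forall_of_countable
    (fun (q : ℕ × ℚ × ℚ) D => (q.2.1 : ℝ) < q.2.2 → ¬ Oscillates u (q.1 + 1) q.2.1 q.2.2 D)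
    (fun _ _ _ hM hDM hrs hD => hM hrs (hD.of_diff_finite hDM))
    (fun q M hM => by
      by_cases hrs : (q.2.1 : ℝ) < q.2.2
      · obtain ⟨N, hNM, hN, hosc⟩ := hcon M hM ((q.1 : ℝ) + 1) _ _ (by positivity) hrs
        exact ⟨N, hNM, hN, fun _ => hosc⟩
      · exact ⟨M, subset_rfl, hM, fun h => absurd h hrs⟩)
  set φ := Nat.nth (· ∈ D)
  have hφ : StrictMono φ := Nat.nth_strictMono hD
  obtain ⟨f, hf⟩ := h φ hφ
  obtain ⟨r, s, hrs, hr, hs⟩ := exists_rat_frequently_lt_and_frequently_gt (B := ‖f‖ * C)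
    (fun n => (f.le_opNorm _).trans (mul_le_mul_of_nonneg_left (hu _) (norm_nonneg f))) hf
  have himage : ∀ {p : ℝ → Prop}, (∃ᶠ n in atTop, p (f (u (φ n)))) →
      {m ∈ D | p (f (u m))}.Infinite := fun hp =>
    ((Nat.frequently_atTop_iff_infinite.1 hp).image hφ.injective.injOn).mono
      (by rintro _ ⟨n, hn, rfl⟩; exact ⟨Nat.nth_mem_of_infinite hD n, hn⟩)
  refine hDosc (⌈‖f‖⌉₊, r, s) (by exact_mod_cast hrs)
    ⟨f, ?_, himage (p := (· < (r : ℝ))) hr, himage (p := ((s : ℝ) < ·)) hs⟩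
  rw [mem_closedBall_zero_iff]
  linarith [Nat.le_ceil ‖f‖]

lemma mul_sum_abs_le_norm_sum {w : ℕ → X} {K r s : ℝ}
    (hw : BooleanIndependent (fun i => {t : closedBall (0 : StrongDual ℝ X) K | t.1 (w i) < r})
      (fun i => {t | s < t.1 (w i)})) (a : ℕ → ℝ) (k : ℕ) :
    (s - r) * ∑ i ∈ Finset.range k, |a i| ≤ 2 * K * ‖∑ i ∈ Finset.range k, a i • w i‖ := by
  -- Test the sum against `t₁ - t₂`, where `t₁` is small exactly where `a` is negative and `t₂`
  -- exactly where it is not.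
  obtain ⟨⟨t₁, ht₁⟩, h₁⟩ := hw {i | a i < 0} k
  obtain ⟨⟨t₂, ht₂⟩, h₂⟩ := hw {i | 0 ≤ a i} k
  rw [mem_closedBall_zero_iff] at ht₁ ht₂
  calc (s - r) * ∑ i ∈ Finset.range k, |a i|
      ≤ ∑ i ∈ Finset.range k, a i * (t₁ (w i) - t₂ (w i)) := by
        rw [Finset.mul_sum]
        refine Finset.sum_le_sum fun i hi => ?_
        have hik := Finset.mem_range.1 hi
        rcases lt_or_ge (a i) 0 with ha | ha
        · have : t₁ (w i) < r := (h₁ i hik).1 ha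
          have : s < t₂ (w i) := (h₂ i hik).2 (not_le.2 ha)
          rw [abs_of_neg ha]
          nlinarith
        · have : s < t₁ (w i) := (h₁ i hik).2 (not_lt.2 ha)
          have : t₂ (w i) < r := (h₂ i hik).1 ha
          rw [abs_of_nonneg ha]
          nlinarith
    _ = (t₁ - t₂) (∑ i ∈ Finset.range k, a i • w i) := by simp [mul_sub]
    _ ≤ ‖t₁ - t₂‖ * ‖∑ i ∈ Finset.range k, a i • w i‖ :=
        (le_abs_self _).trans ((t₁ - t₂).le_opNorm _)
    _ ≤ 2 * K * ‖∑ i ∈ Finset.range k, a i • w i‖ := by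
        gcongr
        linarith [norm_sub_le t₁ t₂]

theorem exists_strictMono_lower_ell1 {u : ℕ → X} {C : ℝ} (hu : ∀ n, ‖u n‖ ≤ C)
    (h : ∀ φ : ℕ → ℕ, StrictMono φ →
      ∃ f : StrongDual ℝ X, ¬ ∃ l, Tendsto (fun n => f (u (φ n))) atTop (𝓝 l)) :
    ∃ φ : ℕ → ℕ, StrictMono φ ∧ ∃ c > 0, ∀ (a : ℕ → ℝ) (k : ℕ),
      c * ∑ i ∈ Finset.range k, |a i| ≤ ‖∑ i ∈ Finset.range k, a i • u (φ i)‖ := by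
  obtain ⟨M, hM, K, r, s, hK, hrs, hosc⟩ := exists_forall_oscillates hu h
  obtain ⟨φ, hφ, hind⟩ := exists_strictMono_booleanIndependent
    (A := fun n => {t : closedBall (0 : StrongDual ℝ X) K | t.1 (u n) < r})
    (B := fun n => {t : closedBall (0 : StrongDual ℝ X) K | s < t.1 (u n)}) hM
    fun N hNM hN => by
      obtain ⟨t, ht, h₁, h₂⟩ := hosc N hNM hN
      exact ⟨⟨t, ht⟩, h₁, h₂⟩
  refine ⟨φ, hφ, (s - r) / (2 * K), div_pos (sub_pos.2 hrs) (by positivity), fun a k => ?_⟩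
  have := mul_sum_abs_le_norm_sum hind a k
  rw [div_mul_eq_mul_div, div_le_iff₀ (by positivity)]
  linarith

end Oscillation

section Embedding

variable {X : Type*} [NormedAddCommGroup X] [NormedSpace ℝ X]

lemma lp.hasSum_abs_one (a : lp (fun _ : ℕ => ℝ) 1) : HasSum (fun i => |a i|) ‖a‖ := by
  have := (lp.memℓp a).summable (p := 1) (by norm_num)
  rw [lp.norm_eq_tsum_rpow (by norm_num)]
  simpa using this.hasSum

theorem containsIsomorphicCopy_lp_one [CompleteSpace X] {w : ℕ → X} {C c : ℝ} (hc : 0 < c)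
    (hw : ∀ i, ‖w i‖ ≤ C)
    (hlow : ∀ (a : ℕ → ℝ) (k : ℕ),
      c * ∑ i ∈ Finset.range k, |a i| ≤ ‖∑ i ∈ Finset.range k, a i • w i‖) :
    ContainsIsomorphicCopy (lp (fun _ : ℕ => ℝ) 1) X := by
  have hbound : ∀ (a : lp (fun _ : ℕ => ℝ) 1) i, ‖a i • w i‖ ≤ C * |a i| := fun a i => by
    rw [norm_smul, Real.norm_eq_abs, mul_comm]
    exact mul_le_mul_of_nonneg_right (hw i) (abs_nonneg _)
  have hsum : ∀ a : lp (fun _ : ℕ => ℝ) 1, Summable fun i => a i • w i := fun a =>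
    ((lp.hasSum_abs_one a).summable.mul_left C).of_norm_bounded (hbound a)
  let T : lp (fun _ : ℕ => ℝ) 1 →L[ℝ] X := LinearMap.mkContinuous
    { toFun := fun a => ∑' i, a i • w i
      map_add' := fun a b => by
        simp only [lp.coeFn_add, Pi.add_apply, add_smul]
        exact (hsum a).tsum_add (hsum b)
      map_smul' := fun t a => by
        simp only [lp.coeFn_smul, Pi.smul_apply, smul_eq_mul, mul_smul, RingHom.id_apply]
        exact (hsum a).tsum_const_smul t }
    C fun a => tsum_of_norm_bounded ((lp.hasSum_abs_one a).mul_left C) (hbound a)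
  exact ⟨T, c, hc, fun a => le_of_tendsto_of_tendsto'
    ((lp.hasSum_abs_one a).tendsto_sum_nat.const_mul c) (hsum a).hasSum.tendsto_sum_nat.norm
    (hlow a)⟩

end Embedding

lemma Submodule.exists_dual_eq_zero_and_eq_infDist {E : Type*} [NormedAddCommGroup E]
    [NormedSpace ℝ E] (S : Submodule ℝ E) (x : E) :
    ∃ Φ : StrongDual ℝ E, ‖Φ‖ ≤ 1 ∧ (∀ s ∈ S, Φ s = 0) ∧ Φ x = infDist x S := by
  obtain ⟨g, hg, hgx⟩ := exists_dual_vector'' ℝ (Submodule.Quotient.mk x : E ⧸ S)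
  refine ⟨g.comp S.mkQL, ?_, fun s hs => ?_, ?_⟩
  · refine ContinuousLinearMap.opNorm_le_bound _ zero_le_one fun y => ?_
    calc ‖g (S.mkQL y)‖ ≤ ‖g‖ * ‖S.mkQL y‖ := g.le_opNorm _
      _ ≤ 1 * ‖y‖ := mul_le_mul hg (Submodule.Quotient.norm_mk_le S y) (norm_nonneg _) zero_le_one
  · simp [(Submodule.Quotient.mk_eq_zero S).2 hs]
  · exact hgx.trans (QuotientAddGroup.norm_mk (S := S.toAddSubgroup) x)

section Goldstine

variable {Y : Type*} [NormedAddCommGroup Y] [NormedSpace ℝ Y]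

lemma norm_le_div_of_forall_mem_closedBall_lt {G : StrongDual ℝ Y} {u R : ℝ} (hR : 0 < R)
    (hG : ∀ y ∈ closedBall (0 : Y) R, G y < u) : ‖G‖ ≤ u / R := by
  have hu : 0 < u := by simpa using hG 0 (mem_closedBall_self hR.le)
  refine ContinuousLinearMap.opNorm_le_of_unit_norm (by positivity) fun y hy => ?_
  have hRy : R • y ∈ closedBall (0 : Y) R := by simp [norm_smul, hy, abs_of_pos hR]
  have h₁ := hG _ hRy
  have h₂ := hG (-(R • y)) (by simpa using hRy)
  simp only [map_neg, map_smul, smul_eq_mul] at h₁ h₂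
  rw [Real.norm_eq_abs, le_div_iff₀ hR]
  cases abs_cases (G y) <;> nlinarith

lemma apply_comp_pi {ι : Type*} [Fintype ι] (Φ : StrongDual ℝ (StrongDual ℝ Y))
    (g : ι → StrongDual ℝ Y) (φ : StrongDual ℝ (ι → ℝ)) :
    Φ (φ.comp (ContinuousLinearMap.pi g)) = φ fun i => Φ (g i) := by
  classical
  have hφ : ∀ w : ι → ℝ, φ w = ∑ i, w i * φ fun j => if i = j then 1 else 0 := fun w => by
    simpa using LinearMap.pi_apply_eq_sum_univ φ.toLinearMap w
  have hsum :
      φ.comp (ContinuousLinearMap.pi g) = ∑ i, φ (fun j => if i = j then 1 else 0) • g i := by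
    ext y
    rw [ContinuousLinearMap.comp_apply, hφ, sum_apply]
    refine Finset.sum_congr rfl fun i _ => ?_
    rw [smul_apply, smul_eq_mul, mul_comm]
    rfl
  rw [hsum, map_sum, hφ]
  refine Finset.sum_congr rfl fun i _ => ?_
  rw [map_smul, smul_eq_mul, mul_comm]

theorem exists_norm_le_abs_sub_le_of_doubleDual (Φ : StrongDual ℝ (StrongDual ℝ Y))
    (S : Finset (StrongDual ℝ Y)) {ε : ℝ} (hε : 0 < ε) :
    ∃ y : Y, ‖y‖ ≤ ‖Φ‖ + ε ∧ ∀ g ∈ S, |g y - Φ g| ≤ ε := by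
  set R := ‖Φ‖ + ε
  have hR : 0 < R := by positivity
  let T : Y →L[ℝ] (S → ℝ) := ContinuousLinearMap.pi fun g => (g : StrongDual ℝ Y)
  let v : S → ℝ := fun g => Φ g
  -- Otherwise a functional `φ` separates `v` from the image of the `R`-ball, and `Φ` evaluated at
  -- `φ ∘ T` contradicts `‖Φ‖ < R`.
  have hv : v ∈ closure (T '' closedBall 0 R) := by
    by_contra hv
    obtain ⟨φ, u, hφu, huv⟩ := geometric_hahn_banach_closed_point
      ((convex_closedBall 0 R).linear_image T.toLinearMap).closure isClosed_closure hv
    have hG : ∀ y ∈ closedBall (0 : Y) R, φ.comp T y < u :=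
      fun y hy => hφu _ (subset_closure ⟨y, hy, rfl⟩)
    have hu : 0 < u := by simpa using hG 0 (mem_closedBall_self hR.le)
    have hΦ : ‖Φ‖ * (u / R) < u := by
      rw [mul_div_assoc', div_lt_iff₀ hR]
      nlinarith
    linarith [apply_comp_pi Φ (fun g : S => (g : StrongDual ℝ Y)) φ,
      (le_abs_self (Φ (φ.comp T))).trans (Φ.le_opNorm _),
      mul_le_mul_of_nonneg_left (norm_le_div_of_forall_mem_closedBall_lt hR hG) (norm_nonneg Φ)]
  obtain ⟨_, ⟨y, hy, rfl⟩, hdist⟩ := Metric.mem_closure_iff.1 hv ε hε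
  refine ⟨y, mem_closedBall_zero_iff.1 hy, fun g hg => ?_⟩
  have := (dist_le_pi_dist v (T y) ⟨g, hg⟩).trans_lt hdist
  rw [Real.dist_eq, abs_sub_comm] at this
  exact this.le

end Goldstine

section Triangular

variable {X : Type*} [NormedAddCommGroup X] [NormedSpace ℝ X]

lemma exists_functional_and_point {F : StrongDual ℝ (StrongDual ℝ X)} {δ : ℝ} (hδ : 0 < δ)
    (hF : 4 * δ ≤ infDist F (Set.range (inclusionInDoubleDual ℝ X))) (xs : Finset X)
    (fs : Finset (StrongDual ℝ X)) (hfs : ∀ g ∈ fs, 3 * δ ≤ F g) :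
    ∃ (f : StrongDual ℝ X) (x : X), ‖f‖ ≤ 1 + δ ∧ ‖x‖ ≤ ‖F‖ + δ ∧ 3 * δ ≤ F f ∧ 2 * δ ≤ f x ∧
      (∀ g ∈ fs, 2 * δ ≤ g x) ∧ ∀ y ∈ xs, |f y| ≤ δ := by
  classical
  set j := inclusionInDoubleDual ℝ X
  -- `Φ` kills `xs` but still sees the distance from `F` to `X`; Goldstine brings it down to `X*`.
  set V := (Submodule.span ℝ (xs : Set X)).map (j : X →ₗ[ℝ] StrongDual ℝ (StrongDual ℝ X))
  obtain ⟨Φ, hΦ, hΦV, hΦF⟩ := V.exists_dual_eq_zero_and_eq_infDist F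
  have hVj : (V : Set _) ⊆ Set.range j := fun _ hy =>
    let ⟨x, _, hx⟩ := Submodule.mem_map.1 hy
    ⟨x, hx⟩
  have hΦF' : 4 * δ ≤ Φ F := hΦF ▸ hF.trans (infDist_le_infDist_of_subset hVj ⟨0, V.zero_mem⟩)
  obtain ⟨f, hf, hfΦ⟩ := exists_norm_le_abs_sub_le_of_doubleDual Φ (insert F (xs.image j)) hδ
  have hFf : 3 * δ ≤ F f := by linarith [(abs_le.1 (hfΦ F (Finset.mem_insert_self _ _))).1]
  obtain ⟨x, hx, hxF⟩ := exists_norm_le_abs_sub_le_of_doubleDual F (insert f fs) hδ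
  have hlarge : ∀ g ∈ insert f fs, 3 * δ ≤ F g → 2 * δ ≤ g x := fun g hg hFg => by
    linarith [(abs_le.1 (hxF g hg)).1]
  refine ⟨f, x, by linarith, hx, hFf, hlarge f (Finset.mem_insert_self _ _) hFf,
    fun g hg => hlarge g (Finset.mem_insert_of_mem hg) (hfs g hg), fun y hy => ?_⟩
  have hΦy : Φ (j y) = 0 := hΦV _ (Submodule.mem_map_of_mem (Submodule.subset_span hy))
  have := hfΦ (j y) (Finset.mem_insert_of_mem (Finset.mem_image_of_mem _ hy))
  rwa [hΦy, sub_zero, dual_def] at this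

theorem exists_triangular_of_not_surjective_inclusionInDoubleDual [CompleteSpace X]
    (hX : ¬ Function.Surjective (inclusionInDoubleDual ℝ X)) :
    ∃ δ > 0, ∃ (f : ℕ → StrongDual ℝ X) (x : ℕ → X) (B C : ℝ), (∀ n, ‖f n‖ ≤ B) ∧
      (∀ n, ‖x n‖ ≤ C) ∧ (∀ i m, i ≤ m → 2 * δ ≤ f i (x m)) ∧ ∀ i m, m < i → |f i (x m)| ≤ δ := by
  obtain ⟨F, hF⟩ := not_forall.1 hX
  have hj : Isometry (inclusionInDoubleDual ℝ X) := (inclusionInDoubleDualLi ℝ (E := X)).isometry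
  set δ := infDist F (Set.range (inclusionInDoubleDual ℝ X)) / 4 with hδdef
  have hδ : 0 < δ := by
    have := (hj.isClosedEmbedding.isClosed_range.notMem_iff_infDist_pos (Set.range_nonempty _)).1 hF
    positivity
  obtain ⟨e, he, hrel⟩ := exists_seq_of_forall_finset_exists
    (fun p : StrongDual ℝ X × X =>
      ‖p.1‖ ≤ 1 + δ ∧ ‖p.2‖ ≤ ‖F‖ + δ ∧ 3 * δ ≤ F p.1 ∧ 2 * δ ≤ p.1 p.2)
    (fun p q => 2 * δ ≤ p.1 q.2 ∧ |q.1 p.2| ≤ δ) fun s hs => by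
      classical
      obtain ⟨f, x, hf, hx, hFf, hfx, hfs, hxs⟩ := exists_functional_and_point hδ (by linarith)
        (s.image Prod.snd) (s.image Prod.fst)
        (Finset.forall_mem_image.2 fun p hp => (hs p hp).2.2.1)
      exact ⟨(f, x), ⟨hf, hx, hFf, hfx⟩, fun p hp =>
        ⟨hfs _ (Finset.mem_image_of_mem _ hp), hxs _ (Finset.mem_image_of_mem _ hp)⟩⟩
  refine ⟨δ, hδ, fun n => (e n).1, fun n => (e n).2, 1 + δ, ‖F‖ + δ, fun n => (he n).1,
    fun n => (he n).2.1, fun i m him => ?_, fun i m hmi => (hrel m i hmi).2⟩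
  rcases him.lt_or_eq with h | rfl
  · exact (hrel i m h).1
  · exact (he i).2.2.2

theorem not_tendsto_weakly_of_triangular {f : ℕ → StrongDual ℝ X} {x : ℕ → X} {B δ : ℝ}
    (hδ : 0 < δ) (hf : ∀ n, ‖f n‖ ≤ B) (hdiag : ∀ i m, i ≤ m → 2 * δ ≤ f i (x m))
    (hoff : ∀ i m, m < i → |f i (x m)| ≤ δ) {φ : ℕ → ℕ} (hφ : StrictMono φ) (z : X) :
    ¬ ∀ g : StrongDual ℝ X, Tendsto (fun k => g (x (φ k))) atTop (𝓝 (g z)) := by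
  intro hz
  -- By Banach–Alaoglu `f` has a weak-* cluster point `g`; it is at most `δ` on every `x m` but at
  -- least `2 δ` on their weak limit `z`.
  obtain ⟨g, -, hg⟩ := (WeakDual.isCompact_closedBall (0 : StrongDual ℝ X) B).exists_mapClusterPt
    (f := atTop) (u := fun n => StrongDual.toWeakDual (f n))
    (tendsto_principal.2 (.of_forall fun n => by simpa using hf n))
  have heval : ∀ (v : X) (K : Set ℝ), IsClosed K → (∀ᶠ n in atTop, f n v ∈ K) → g v ∈ K :=
    fun v K hK hev => hK.closure_subset_iff.2 subset_rfl <|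
      (hg.tendsto_comp (WeakDual.eval_continuous v).continuousAt).mem_closure_of_mem _ hev
  have hgx : ∀ m, |g (x m)| ≤ δ := fun m =>
    heval (x m) {a | |a| ≤ δ} (isClosed_le continuous_abs continuous_const) <|
      (eventually_gt_atTop m).mono fun i hi => hoff i m hi
  have hgz : 2 * δ ≤ g z := heval z (Set.Ici (2 * δ)) isClosed_Ici <| Eventually.of_forall fun i =>
    ge_of_tendsto (hz (f i)) <| (eventually_ge_atTop i).mono fun k hk =>
      hdiag i _ (hk.trans (hφ.id_le k))
  have : |g z| ≤ δ := le_of_tendsto' ((hz (WeakDual.toStrongDual g)).abs) fun k => hgx _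
  linarith [le_abs_self (g z)]

end Triangular

theorem contains_ell1_of_weaklySeqComplete_nonreflexive
    (X : Type*) [NormedAddCommGroup X] [NormedSpace ℝ X] [CompleteSpace X]
    (hwsc : ∀ x : ℕ → X,
      (∀ f : X →L[ℝ] ℝ, ∃ l : ℝ, Tendsto (fun n => f (x n)) atTop (𝓝 l)) →
      ∃ z : X, ∀ f : X →L[ℝ] ℝ, Tendsto (fun n => f (x n)) atTop (𝓝 (f z)))
    (hnonrefl : ¬ Function.Surjective (NormedSpace.inclusionInDoubleDual ℝ X)) :
    ContainsIsomorphicCopy (lp (fun _ : ℕ => ℝ) 1) X := by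
  obtain ⟨δ, hδ, f, x, B, C, hf, hx, hdiag, hoff⟩ :=
    exists_triangular_of_not_surjective_inclusionInDoubleDual hnonrefl
  obtain ⟨φ, -, c, hc, hlow⟩ := exists_strictMono_lower_ell1 hx fun φ hφ => by
    by_contra! hcauchy
    obtain ⟨z, hz⟩ := hwsc _ hcauchy
    exact not_tendsto_weakly_of_triangular hδ hf hdiag hoff hφ z hz
  exact containsIsomorphicCopy_lp_one hc (fun i => hx (φ i)) hlow
end

section
/- Let X be an infinite-dimensional real Banach space whose dual closed unit ball is sequentially compact in the weak* topology. Then X contains an isomorphic copy of c₀ if and only if X contains a complemented copy of c₀. -/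
/-! If `f : c₀ → X` is an embedding, Hahn–Banach extends the coordinate functionals `z ↦ zₙ`,
transported to the range of `f`, to uniformly bounded functionals `xₙ` on `X`. By weak* sequential
compactness a subsequence `x_{φ k}` converges weak* to some `g`, and `g` vanishes on the range of
`f` because `z_{φ k} → 0`. Hence `S x := (x_{φ k} x - g x)ₖ` is a bounded operator `X → c₀`. It is a
left inverse of `f ∘ j`, where `j : c₀ → c₀` places `zₖ` at the index `φ k`, and an operator with a
bounded left inverse has complemented range. -/

open scoped ZeroAtInfty
open Filter Topology

/-- `X` contains a complemented copy of `Z`: a closed subspace `F` of `X` isomorphic to `Z`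
together with a bounded linear projection of `X` onto `F`. -/
def ContainsComplementedCopy (Z X : Type*) [NormedAddCommGroup Z] [NormedSpace ℝ Z]
    [NormedAddCommGroup X] [NormedSpace ℝ X] : Prop :=
  ∃ F : Submodule ℝ X, IsClosed (F : Set X) ∧ Nonempty (F ≃L[ℝ] Z) ∧
    ∃ P : X →L[ℝ] X, LinearMap.range (P : X →ₗ[ℝ] X) = F ∧ ∀ x ∈ F, P x = x

/-- The closed unit ball of the dual of `X` is sequentially compact in the weak* topology. -/
def DualBallWeakStarSeqCompact (X : Type*) [NormedAddCommGroup X] [NormedSpace ℝ X] : Prop :=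
  ∀ f : ℕ → (X →L[ℝ] ℝ), (∀ n, ‖f n‖ ≤ 1) →
    ∃ (g : X →L[ℝ] ℝ) (φ : ℕ → ℕ), StrictMono φ ∧ ‖g‖ ≤ 1 ∧
      ∀ x : X, Tendsto (fun n => f (φ n) x) atTop (𝓝 (g x))

open Function

theorem tendsto_cofinite_extend_zero {ι η β : Type*} [TopologicalSpace β] [Zero β]
    {φ : ι → η} (hφ : Injective φ) {u : ι → β} (hu : Tendsto u cofinite (𝓝 0)) :
    Tendsto (extend φ u 0) cofinite (𝓝 0) := by
  intro U hU
  refine ((hu hU).image φ).subset fun n hn => ?_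
  by_cases hn' : ∃ i, φ i = n
  · obtain ⟨i, rfl⟩ := hn'
    exact ⟨i, by simpa [hφ.extend_apply] using hn, rfl⟩
  · exact absurd (mem_of_mem_nhds hU) (by simpa [extend_apply' _ _ _ hn'] using hn)

namespace ZeroAtInftyContinuousMap

variable {α γ : Type*} [TopologicalSpace α] [TopologicalSpace γ]

theorem norm_apply_le {β : Type*} [SeminormedAddCommGroup β] (z : C₀(α, β)) (a : α) :
    ‖z a‖ ≤ ‖z‖ := by
  rw [← norm_toBCF_eq_norm]
  exact z.toBCF.norm_coe_le_norm a

theorem norm_le_of_forall {β : Type*} [SeminormedAddCommGroup β] {z : C₀(α, β)} {C : ℝ}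
    (hC : 0 ≤ C) (h : ∀ a, ‖z a‖ ≤ C) : ‖z‖ ≤ C := by
  rw [← norm_toBCF_eq_norm]
  exact (BoundedContinuousFunction.norm_le hC).2 h

section Discrete

variable [DiscreteTopology α] {β : Type*} [TopologicalSpace β] [Zero β]

theorem tendsto_cofinite (z : C₀(α, β)) : Tendsto z cofinite (𝓝 0) := by
  simpa [cocompact_eq_cofinite] using zero_at_infty z

theorem tendsto_atTop (z : C₀(ℕ, β)) : Tendsto z atTop (𝓝 0) :=
  Nat.cofinite_eq_atTop ▸ z.tendsto_cofinite

def ofTendstoCofinite (u : α → β) (hu : Tendsto u cofinite (𝓝 0)) : C₀(α, β) where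
  toFun := u
  continuous_toFun := continuous_of_discreteTopology
  zero_at_infty' := by rwa [cocompact_eq_cofinite]

@[simp]
theorem coe_ofTendstoCofinite (u : α → β) (hu : Tendsto u cofinite (𝓝 0)) :
    ⇑(ofTendstoCofinite u hu) = u :=
  rfl

end Discrete

noncomputable def evalCLM (a : α) : C₀(α, ℝ) →L[ℝ] ℝ :=
  LinearMap.mkContinuous
    { toFun z := z a
      map_add' _ _ := rfl
      map_smul' _ _ := rfl }
    1 fun z => by simpa using norm_apply_le z a

@[simp]
theorem evalCLM_apply (a : α) (z : C₀(α, ℝ)) : evalCLM a z = z a :=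
  rfl

theorem norm_evalCLM_le (a : α) : ‖evalCLM a‖ ≤ 1 :=
  LinearMap.mkContinuous_norm_le _ zero_le_one _

variable [DiscreteTopology α] [DiscreteTopology γ] {φ : α → γ}

noncomputable def extendByZero (hφ : Injective φ) : C₀(α, ℝ) →L[ℝ] C₀(γ, ℝ) :=
  LinearMap.mkContinuous
    { toFun z := ofTendstoCofinite _ (tendsto_cofinite_extend_zero hφ z.tendsto_cofinite)
      map_add' z w := by ext; exact congrFun ((ExtendByZero.linearMap ℝ φ).map_add z w) _
      map_smul' r z := by ext; exact congrFun ((ExtendByZero.linearMap ℝ φ).map_smul r z) _ }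
    1 fun z => by
      refine (one_mul ‖z‖).symm ▸ norm_le_of_forall (norm_nonneg z) fun n => ?_
      by_cases hn : ∃ k, φ k = n
      · obtain ⟨k, rfl⟩ := hn
        simpa [hφ.extend_apply] using norm_apply_le z k
      · simp [extend_apply' _ _ _ hn]

@[simp]
theorem extendByZero_apply_apply (hφ : Injective φ) (z : C₀(α, ℝ)) (a : α) :
    extendByZero hφ z (φ a) = z a :=
  hφ.extend_apply _ _ a

end ZeroAtInftyContinuousMap

section Normed

variable {E F : Type*} [NormedAddCommGroup E] [NormedSpace ℝ E] [NormedAddCommGroup F]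
  [NormedSpace ℝ F]

theorem ContinuousLinearMap.exists_dual_comp_eq_of_lowerBound (f : E →L[ℝ] F) {c : ℝ}
    (hc : 0 < c) (hf : ∀ z, c * ‖z‖ ≤ ‖f z‖) (ψ : E →L[ℝ] ℝ) :
    ∃ x : F →L[ℝ] ℝ, (∀ z, x (f z) = ψ z) ∧ ‖x‖ ≤ c⁻¹ * ‖ψ‖ := by
  have hψ : ∀ z, ‖ψ z‖ ≤ c⁻¹ * ‖ψ‖ * ‖f z‖ := fun z =>
    calc ‖ψ z‖ ≤ ‖ψ‖ * ‖z‖ := ψ.le_opNorm z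
      _ ≤ ‖ψ‖ * (c⁻¹ * ‖f z‖) := by gcongr; rw [le_inv_mul_iff₀ hc]; exact hf z
      _ = c⁻¹ * ‖ψ‖ * ‖f z‖ := by ring
  let ψ' := (ψ : E →ₗ[ℝ] ℝ).compLeftInverse (f : E →ₗ[ℝ] F)
  have hψ' : ∀ z, ψ' ⟨f z, z, rfl⟩ = ψ z := fun z =>
    LinearMap.compLeftInverse_apply_of_bdd _ _ ⟨_, hψ⟩ z _ rfl
  have hnorm : ‖ψ'‖ ≤ c⁻¹ * ‖ψ‖ := by
    refine ψ'.opNorm_le_bound (by positivity) ?_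
    rintro ⟨_, z, rfl⟩
    simpa [hψ'] using hψ z
  obtain ⟨x, hx, hxn⟩ := exists_extension_norm_eq _ ψ'
  exact ⟨x, fun z => (hx ⟨f z, z, rfl⟩).trans (hψ' z), hxn ▸ hnorm⟩

theorem ContainsComplementedCopy.of_leftInverse (j : E →L[ℝ] F) (S : F →L[ℝ] E)
    (h : LeftInverse S j) : ContainsComplementedCopy E F := by
  set R := LinearMap.range (j : E →ₗ[ℝ] F)
  have hR : R.ClosedComplemented := j.closedComplemented_range_of_leftInverse S h
  obtain ⟨p, hp⟩ := id hR
  have hfix : ∀ x ∈ R, R.subtypeL (p x) = x := fun x hx => congrArg Subtype.val (hp ⟨x, hx⟩)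
  have hjS : RightInverse (S ∘L R.subtypeL) j.rangeRestrict := by
    rintro ⟨_, z, rfl⟩
    ext
    simp [h z]
  refine ⟨R, hR.isClosed, ⟨(ContinuousLinearEquiv.equivOfInverse j.rangeRestrict _ h hjS).symm⟩,
    R.subtypeL ∘L p, le_antisymm ?_ fun x hx => ⟨x, hfix x hx⟩, hfix⟩
  rintro _ ⟨x, rfl⟩
  exact (p x).2

theorem ContainsComplementedCopy.containsIsomorphicCopy (h : ContainsComplementedCopy E F) :
    ContainsIsomorphicCopy E F := by
  obtain ⟨R, -, ⟨e⟩, -⟩ := h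
  refine ⟨R.subtypeL ∘L (e.symm : E →L[ℝ] R), (‖(e : R →L[ℝ] E)‖ + 1)⁻¹, by positivity,
    fun z => ?_⟩
  rw [inv_mul_le_iff₀ (by positivity)]
  calc ‖z‖ = ‖e (e.symm z)‖ := by rw [e.apply_symm_apply]
    _ ≤ ‖(e : R →L[ℝ] E)‖ * ‖e.symm z‖ := (e : R →L[ℝ] E).le_opNorm _
    _ ≤ (‖(e : R →L[ℝ] E)‖ + 1) * ‖e.symm z‖ := by gcongr; linarith
    _ = _ := by simp

end Normed

section Dual

variable {X : Type*} [NormedAddCommGroup X] [NormedSpace ℝ X]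

theorem DualBallWeakStarSeqCompact.exists_subseq_tendsto (h : DualBallWeakStarSeqCompact X)
    {f : ℕ → X →L[ℝ] ℝ} {C : ℝ} (hf : ∀ n, ‖f n‖ ≤ C) :
    ∃ (g : X →L[ℝ] ℝ) (φ : ℕ → ℕ), StrictMono φ ∧
      ∀ x, Tendsto (fun n => f (φ n) x) atTop (𝓝 (g x)) := by
  set r := max C 1
  have hr : 0 < r := lt_max_of_lt_right one_pos
  obtain ⟨g, φ, hφ, -, hlim⟩ := h (fun n => r⁻¹ • f n) fun n => by
    rw [norm_smul, norm_inv, Real.norm_of_nonneg hr.le, inv_mul_le_one₀ hr]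
    exact (hf n).trans (le_max_left _ _)
  refine ⟨r • g, φ, hφ, fun x => ?_⟩
  simpa [hr.ne'] using (hlim x).const_mul r

open ZeroAtInftyContinuousMap in
noncomputable def ContinuousLinearMap.toC₀OfTendstoZero (ℓ : ℕ → X →L[ℝ] ℝ) {C : ℝ}
    (hC : ∀ n, ‖ℓ n‖ ≤ C) (h0 : ∀ x, Tendsto (fun n => ℓ n x) atTop (𝓝 0)) :
    X →L[ℝ] C₀(ℕ, ℝ) :=
  LinearMap.mkContinuous
    { toFun x := ofTendstoCofinite _ (Nat.cofinite_eq_atTop ▸ h0 x)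
      map_add' x y := by ext; simp
      map_smul' r x := by ext; simp }
    C fun x => norm_le_of_forall (by nlinarith [(norm_nonneg _).trans (hC 0), norm_nonneg x])
      fun n => ((ℓ n).le_opNorm x).trans (by gcongr; exact hC n)

@[simp]
theorem ContinuousLinearMap.toC₀OfTendstoZero_apply_apply (ℓ : ℕ → X →L[ℝ] ℝ) {C : ℝ}
    (hC : ∀ n, ‖ℓ n‖ ≤ C) (h0 : ∀ x, Tendsto (fun n => ℓ n x) atTop (𝓝 0)) (x : X) (n : ℕ) :
    toC₀OfTendstoZero ℓ hC h0 x n = ℓ n x :=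
  rfl

open ZeroAtInftyContinuousMap in
theorem DualBallWeakStarSeqCompact.containsComplementedCopy_of_containsIsomorphicCopy
    (h : DualBallWeakStarSeqCompact X) (hX : ContainsIsomorphicCopy C₀(ℕ, ℝ) X) :
    ContainsComplementedCopy C₀(ℕ, ℝ) X := by
  obtain ⟨f, c, hc, hf⟩ := hX
  choose x hxf hxn using fun n => f.exists_dual_comp_eq_of_lowerBound hc hf (evalCLM n)
  have hx : ∀ n, ‖x n‖ ≤ c⁻¹ := fun n =>
    (hxn n).trans (mul_le_of_le_one_right (by positivity) (norm_evalCLM_le n))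
  obtain ⟨g, φ, hφ, hlim⟩ := h.exists_subseq_tendsto hx
  have hg : ∀ z, g (f z) = 0 := fun z => tendsto_nhds_unique (hlim (f z)) <| by
    simp only [hxf, evalCLM_apply]
    exact z.tendsto_atTop.comp hφ.tendsto_atTop
  have hbound : ∀ n, ‖x (φ n) - g‖ ≤ c⁻¹ + ‖g‖ := fun n =>
    (norm_sub_le _ _).trans (by gcongr; exact hx _)
  let S := ContinuousLinearMap.toC₀OfTendstoZero (fun n => x (φ n) - g) hbound
    fun y => by simpa using tendsto_sub_nhds_zero_iff.2 (hlim y)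
  refine .of_leftInverse (f ∘L extendByZero hφ.injective) S fun z => ?_
  ext n
  simp [S, hxf, hg]

end Dual

theorem copy_c0_iff_complemented_copy_c0_of_dualBall_weakStarSeqCompact_general
    (X : Type*) [NormedAddCommGroup X] [NormedSpace ℝ X]
    (h : DualBallWeakStarSeqCompact X) :
    ContainsIsomorphicCopy C₀(ℕ, ℝ) X ↔ ContainsComplementedCopy C₀(ℕ, ℝ) X :=
  ⟨h.containsComplementedCopy_of_containsIsomorphicCopy,
    ContainsComplementedCopy.containsIsomorphicCopy⟩

theorem copy_c0_iff_complemented_copy_c0_of_dualBall_weakStarSeqCompact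
    (X : Type*) [NormedAddCommGroup X] [NormedSpace ℝ X] [CompleteSpace X]
    (hX : ¬ FiniteDimensional ℝ X) (h : DualBallWeakStarSeqCompact X) :
    ContainsIsomorphicCopy C₀(ℕ, ℝ) X ↔ ContainsComplementedCopy C₀(ℕ, ℝ) X :=
  copy_c0_iff_complemented_copy_c0_of_dualBall_weakStarSeqCompact_general X h
end
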